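/- arXiv:2502.08396 — 8 statements merged into one kernel-verified Lean document; each statement's English description precedes it below -/
import Mathlib

section
/- For all real numbers a, b, s, t > 0, one has s + t + 2a + 2b ≥ 2·3^(1/4) · √((√3/2)(2ab + (s+t)(a+b))), with equality if and only if a = b and s + t = a + b. (This is the optimization at the core of the optimal lattice theorem for the (6;6) configuration: two adjacent equiangular hexagons E₁ with side lengths a, b, s and E₂ with side lengths a, b, t, sharing the two edges of lengths a and b, have areas |E₁| = (√3/2)(ab + sa + sb) and |E₂| = (√3/2)(ab + ta + tb), total area (√3/2)(2ab + (s+t)(a+b)), and tiling perimeter s + t + 2a + 2b; the minimum of the perimeter given the total area is 2·3^(1/4)·√(|E₁|+|E₂|).) -/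
open Real

/-- For all real `a, b, s, t > 0`,
`s + t + 2a + 2b ≥ 2·3^(1/4) · √((√3/2)(2ab + (s+t)(a+b)))`,
with equality iff `a = b` and `s + t = a + b`. -/
theorem stmt_1 (a b s t : ℝ) (ha : 0 < a) (hb : 0 < b) (hs : 0 < s) (ht : 0 < t) :
    2 * (3 : ℝ) ^ ((1 : ℝ) / 4) *
        Real.sqrt (Real.sqrt 3 / 2 * (2 * (a * b) + (s + t) * (a + b)))
      ≤ s + t + 2 * a + 2 * b ∧
    (s + t + 2 * a + 2 * b =
        2 * (3 : ℝ) ^ ((1 : ℝ) / 4) *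
          Real.sqrt (Real.sqrt 3 / 2 * (2 * (a * b) + (s + t) * (a + b)))
      ↔ a = b ∧ s + t = a + b) := by
  set M : ℝ := 2 * (a * b) + (s + t) * (a + b) with hMdef
  have hQ0 : 0 ≤ Real.sqrt 3 / 2 * M := by positivity
  set L : ℝ := 2 * (3 : ℝ) ^ ((1 : ℝ) / 4) * Real.sqrt (Real.sqrt 3 / 2 * M) with hLdef
  set P : ℝ := s + t + 2 * a + 2 * b with hPdef
  have hL0 : 0 ≤ L := by positivity
  have hP0 : 0 ≤ P := by positivity
  have hc : ((3 : ℝ) ^ ((1 : ℝ) / 4)) ^ 2 = Real.sqrt 3 := by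
    rw [← Real.rpow_natCast ((3 : ℝ) ^ ((1 : ℝ) / 4)) 2,
      ← Real.rpow_mul (by norm_num : (0:ℝ) ≤ 3)]
    norm_num [Real.sqrt_eq_rpow]
  have hr : Real.sqrt (Real.sqrt 3 / 2 * M) ^ 2 = Real.sqrt 3 / 2 * M :=
    Real.sq_sqrt hQ0
  have h3 : Real.sqrt 3 * Real.sqrt 3 = 3 := Real.mul_self_sqrt (by norm_num)
  have hL2 : L ^ 2 = 6 * M := by
    calc L ^ 2 = 4 * ((3 : ℝ) ^ ((1 : ℝ) / 4)) ^ 2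
        * Real.sqrt (Real.sqrt 3 / 2 * M) ^ 2 := by ring
      _ = 4 * Real.sqrt 3 * (Real.sqrt 3 / 2 * M) := by rw [hc, hr]
      _ = 2 * (Real.sqrt 3 * Real.sqrt 3) * M := by ring
      _ = 6 * M := by rw [h3]; ring
  have key : P ^ 2 - L ^ 2 = (s + t - (a + b)) ^ 2 + 3 * (a - b) ^ 2 := by
    rw [hL2, hPdef, hMdef]; ring
  have hsq : L ^ 2 ≤ P ^ 2 := by
    have hA := sq_nonneg (s + t - (a + b))
    have hB := sq_nonneg (a - b)
    linarith
  have hLP : L ≤ P := by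
    have := Real.sqrt_le_sqrt hsq
    rwa [Real.sqrt_sq hL0, Real.sqrt_sq hP0] at this
  refine ⟨hLP, ?_, ?_⟩
  · intro h
    have h2 : (s + t - (a + b)) ^ 2 + 3 * (a - b) ^ 2 = 0 := by
      rw [← key, h]; ring
    have hA := sq_nonneg (s + t - (a + b))
    have hB := sq_nonneg (a - b)
    have h4 : (a - b) ^ 2 = 0 := by linarith
    have h5 : (s + t - (a + b)) ^ 2 = 0 := by linarith
    constructor
    · have := sq_eq_zero_iff.mp h4; linarith
    · have := sq_eq_zero_iff.mp h5; linarith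
  · rintro ⟨h1, h2⟩
    have heq : P ^ 2 = L ^ 2 := by
      have : P ^ 2 - L ^ 2 = 0 := by rw [key, h2, h1]; ring
      linarith
    calc P = Real.sqrt (P ^ 2) := (Real.sqrt_sq hP0).symm
      _ = Real.sqrt (L ^ 2) := by rw [heq]
      _ = L := Real.sqrt_sq hL0
end

section
/- Let r > 0 and let E ⊂ ℝ² be the intersection of the four closed disks of radius r centered at the points (r/√2, 0), (−r/√2, 0), (0, r/√2) and (0, −r/√2). Then the two-dimensional Lebesgue measure of E equals (π/3 + 1 − √3)·r². (The set E is the curvilinear square with four convex circular edges of radius r meeting at angles of 120 degrees; it is the case θ = π/12 of the quadrangular curvilinear polygon, and it is the shape of the high-pressure tile E₁ in the optimal (4;8) configuration.) -/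
open Real MeasureTheory

/-- A point of the Euclidean plane. -/
noncomputable def pt (x y : ℝ) : EuclideanSpace ℝ (Fin 2) := WithLp.toLp 2 ![x, y]

section Helpers
open Set

lemma sqrt_le_of_le_sq {A b : ℝ} (hb : 0 ≤ b) (h : A ≤ b^2) : Real.sqrt A ≤ b := by
  calc Real.sqrt A ≤ Real.sqrt (b^2) := Real.sqrt_le_sqrt h
  _ = b := Real.sqrt_sq hb

lemma le_sqrt_of_sq_le {b A : ℝ} (hb : 0 ≤ b) (h : b^2 ≤ A) : b ≤ Real.sqrt A :=
  (Real.le_sqrt hb (le_trans (sq_nonneg b) h)).2 h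

lemma abs_le_of_sq_le {x u : ℝ} (hu : 0 ≤ u) (h : x^2 ≤ u^2) : |x| ≤ u := by
  rw [← Real.sqrt_sq_eq_abs, ← Real.sqrt_sq hu]; exact Real.sqrt_le_sqrt h

noncomputable def sF (r x : ℝ) : ℝ :=
  (x * Real.sqrt (r^2 - x^2) + r^2 * Real.arcsin (x / r)) / 2

lemma sF_neg (r x : ℝ) : sF r (-x) = - sF r x := by
  simp [sF, Real.arcsin_neg, neg_div]
  ring

lemma sF_cont (r : ℝ) : Continuous (sF r) := by
  unfold sF
  exact (((continuous_id.mul (Real.continuous_sqrt.comp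
      ((continuous_const.sub (continuous_pow 2))))).add
    (continuous_const.mul (Real.continuous_arcsin.comp
      (continuous_id.div_const r)))).div_const 2)

lemma sF_hasDerivAt (r : ℝ) (hr : 0 < r) {x : ℝ} (hx : x ∈ Set.Ioo (-r) r) :
    HasDerivAt (sF r) (Real.sqrt (r^2 - x^2)) x := by
  obtain ⟨hx1, hx2⟩ := hx
  have h1 : (0:ℝ) < r^2 - x^2 := by nlinarith
  have hs : 0 < Real.sqrt (r^2 - x^2) := Real.sqrt_pos.2 h1
  have hssq : Real.sqrt (r^2 - x^2) ^ 2 = r^2 - x^2 := Real.sq_sqrt h1.le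
  have hinner : HasDerivAt (fun y : ℝ => r^2 - y^2) (-(2*x)) x := by
    simpa using (hasDerivAt_pow 2 x).const_sub (r^2)
  have hsqrt : HasDerivAt (fun y : ℝ => Real.sqrt (r^2 - y^2))
      (1 / (2 * Real.sqrt (r^2 - x^2)) * (-(2*x))) x :=
    (Real.hasDerivAt_sqrt h1.ne').comp x hinner
  have hmul := (hasDerivAt_id x).mul hsqrt
  have hxr1 : x / r ≠ -1 := by
    intro h; rw [div_eq_iff hr.ne'] at h; rw [h] at hx1; simp at hx1
  have hxr2 : x / r ≠ 1 := by
    intro h; rw [div_eq_iff hr.ne'] at h; rw [h] at hx2; simp at hx2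
  have harc : HasDerivAt (fun y : ℝ => Real.arcsin (y / r))
      (1 / Real.sqrt (1 - (x/r)^2) * (1/r)) x := by
    have := (Real.hasDerivAt_arcsin hxr1 hxr2).comp x ((hasDerivAt_id x).div_const r)
    simpa [Function.comp_def] using this
  have hsq1 : Real.sqrt (1 - (x/r)^2) = Real.sqrt (r^2 - x^2) / r := by
    rw [show (1 : ℝ) - (x/r)^2 = (r^2 - x^2)/r^2 by field_simp,
      Real.sqrt_div h1.le, Real.sqrt_sq hr.le]
  have htot := ((hmul.add (harc.const_mul (r^2))).div_const 2)
  convert htot using 1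
  case e'_4 => rfl
  case e'_5 => rfl
  case e'_8 => rfl
  rw [hsq1]
  field_simp
  simp only [id_eq]
  linear_combination hssq

lemma integral_sqrt_rsq (r : ℝ) (hr : 0 < r) {b₁ b₂ : ℝ} (h1 : -r ≤ b₁) (h12 : b₁ ≤ b₂)
    (h2 : b₂ ≤ r) : ∫ x in b₁..b₂, Real.sqrt (r^2 - x^2) = sF r b₂ - sF r b₁ := by
  apply intervalIntegral.integral_eq_sub_of_hasDeriv_right_of_le h12
    ((sF_cont r).continuousOn)
  · intro x hx
    exact (sF_hasDerivAt r hr ⟨lt_of_le_of_lt h1 hx.1, lt_of_lt_of_le hx.2 h2⟩).hasDerivWithinAt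
  · apply Continuous.intervalIntegrable
    fun_prop

lemma arcsin_pi12 : Real.arcsin ((Real.sqrt 3 - 1) / (2 * Real.sqrt 2)) = π/12 := by
  have hpi := Real.pi_pos
  have h12 : (Real.sqrt 3 - 1) / (2 * Real.sqrt 2) = Real.sin (π/12) := by
    rw [show (π/12 : ℝ) = π/3 - π/4 by ring, Real.sin_sub, Real.sin_pi_div_three,
      Real.cos_pi_div_four, Real.cos_pi_div_three, Real.sin_pi_div_four]
    have s2 : (0:ℝ) < Real.sqrt 2 := Real.sqrt_pos.2 (by norm_num)
    have s2sq : Real.sqrt 2 * Real.sqrt 2 = 2 := Real.mul_self_sqrt (by norm_num)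
    field_simp
    nlinarith [s2sq, s2, Real.sqrt_nonneg 3]
  rw [h12, Real.arcsin_sin (by linarith) (by linarith)]

lemma arcsin_5pi12 : Real.arcsin ((Real.sqrt 3 + 1) / (2 * Real.sqrt 2)) = 5*π/12 := by
  have hpi := Real.pi_pos
  have h12 : (Real.sqrt 3 + 1) / (2 * Real.sqrt 2) = Real.sin (5*π/12) := by
    rw [show (5*π/12 : ℝ) = π/6 + π/4 by ring, Real.sin_add, Real.sin_pi_div_six,
      Real.cos_pi_div_four, Real.cos_pi_div_six, Real.sin_pi_div_four]
    have s2 : (0:ℝ) < Real.sqrt 2 := Real.sqrt_pos.2 (by norm_num)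
    have s2sq : Real.sqrt 2 * Real.sqrt 2 = 2 := Real.mul_self_sqrt (by norm_num)
    field_simp
    nlinarith [s2sq, s2, Real.sqrt_nonneg 3]
  rw [h12, Real.arcsin_sin (by linarith) (by linarith)]


end Helpers



section Main
open Set

set_option maxHeartbeats 1000000 in
lemma basic_facts (r a t c : ℝ) (hr : 0 < r) (ha : a = r / Real.sqrt 2)
    (ht : t = a * (Real.sqrt 3 - 1) / 2) (hc : c = r - a) :
    0 < a ∧ a ^ 2 = r ^ 2 / 2 ∧ 0 < t ∧ 0 < c ∧ t ^ 2 + (t + a) ^ 2 = r ^ 2 ∧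
      t < c ∧ c < a ∧ a < r ∧ t + a ≤ r := by
  have s2 : (0:ℝ) < Real.sqrt 2 := Real.sqrt_pos.2 (by norm_num)
  have s2sq : Real.sqrt 2 ^ 2 = 2 := Real.sq_sqrt (by norm_num)
  have s3 : (0:ℝ) < Real.sqrt 3 := Real.sqrt_pos.2 (by norm_num)
  have s3sq : Real.sqrt 3 ^ 2 = 3 := Real.sq_sqrt (by norm_num)
  have h21 : 1 < Real.sqrt 2 := by nlinarith
  have h31 : 1 < Real.sqrt 3 := by nlinarith
  have h32 : Real.sqrt 3 < 2 := by nlinarith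
  have ha0 : 0 < a := by rw [ha]; exact div_pos hr s2
  have ha2 : a ^ 2 = r ^ 2 / 2 := by rw [ha, div_pow, s2sq]
  have hr' : r = a * Real.sqrt 2 := by rw [ha]; field_simp
  have ht0 : 0 < t := by
    rw [ht]; exact div_pos (mul_pos ha0 (by linarith)) (by norm_num)
  have hra : a < r := by rw [ha]; exact div_lt_self hr h21
  have hc0 : 0 < c := by rw [hc]; linarith
  have hkey : t^2 + (t+a)^2 = r^2 := by
    rw [ht]; field_simp; nlinarith [s3sq, ha2]
  have htc : t < c := by
    have key : Real.sqrt 3 + 1 < 2 * Real.sqrt 2 :=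
      lt_of_pow_lt_pow_left₀ 2 (by positivity)
        (show (Real.sqrt 3 + 1)^2 < (2*Real.sqrt 2)^2 by nlinarith)
    rw [ht, hc, hr']
    nlinarith [ha0, key]
  have hca : c < a := by
    rw [hc, hr']
    nlinarith [ha0, h21]
  have hta : t + a ≤ r := by
    rw [show t + a = Real.sqrt ((t+a)^2) from (Real.sqrt_sq (by positivity)).symm]
    exact sqrt_le_of_le_sq hr.le (by nlinarith [hkey, sq_nonneg t])
  exact ⟨ha0, ha2, ht0, hc0, hkey, htc, hca, hra, hta⟩

set_option maxHeartbeats 1000000 in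
lemma sub_width (r a c : ℝ) (hr : 0 < r) (ha0 : 0 < a) (ha2 : a ^ 2 = r ^ 2 / 2)
    (hc0 : 0 < c) (hca : c < a) :
    ∀ x ∈ Set.Icc (-c) c, a ≤ Real.sqrt (r^2 - x^2) := by
  intro x hx
  obtain ⟨hx1, hx2⟩ := hx
  refine le_sqrt_of_sq_le ha0.le ?_
  nlinarith [mul_nonneg (by linarith : (0:ℝ) ≤ c - x) (by linarith : (0:ℝ) ≤ c + x),
    hca, ha2, hc0, ha0]

set_option maxHeartbeats 1000000 in
lemma sec_eq (r a t c : ℝ) (hr : 0 < r) (ha0 : 0 < a) (ha2 : a ^ 2 = r ^ 2 / 2)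
    (ht0 : 0 < t) (hc0 : 0 < c) (hca : c < a) (hc : c = r - a)
    (S : Set (ℝ × ℝ))
    (hS : S = {q | (q.1 - a)^2 + q.2^2 ≤ r^2 ∧ (q.1 + a)^2 + q.2^2 ≤ r^2 ∧
      q.1^2 + (q.2 - a)^2 ≤ r^2 ∧ q.1^2 + (q.2 + a)^2 ≤ r^2})
    (m : ℝ → ℝ)
    (hm : m = fun x => min (Real.sqrt (r^2 - x^2) - a)
      (min (Real.sqrt (r^2 - (x+a)^2)) (Real.sqrt (r^2 - (x-a)^2)))) :
    ∀ x : ℝ, Prod.mk x ⁻¹' S =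
      if x ∈ Set.Icc (-c) c then Set.Icc (-(m x)) (m x) else (∅ : Set ℝ) := by
  intro x
  split_ifs with hx
  · obtain ⟨hx1, hx2⟩ := hx
    have hA : (0:ℝ) ≤ r^2 - (x+a)^2 := by nlinarith [hc0, hca]
    have hB : (0:ℝ) ≤ r^2 - (x-a)^2 := by nlinarith [hc0, hca]
    have hu := sub_width r a c hr ha0 ha2 hc0 hca x ⟨hx1, hx2⟩
    have hu0 : (0:ℝ) ≤ Real.sqrt (r^2 - x^2) := Real.sqrt_nonneg _
    have husq : Real.sqrt (r^2 - x^2)^2 = r^2 - x^2 :=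
      Real.sq_sqrt (by nlinarith [hc0, hca])
    ext y
    simp only [Set.mem_preimage, hS, Set.mem_setOf_eq, Set.mem_Icc, hm]
    constructor
    · rintro ⟨h1, h2, h3, h4⟩
      have hy1 : |y| ≤ Real.sqrt (r^2 - (x+a)^2) := by
        rw [← Real.sqrt_sq_eq_abs]; exact Real.sqrt_le_sqrt (by nlinarith)
      have hy2 : |y| ≤ Real.sqrt (r^2 - (x-a)^2) := by
        rw [← Real.sqrt_sq_eq_abs]; exact Real.sqrt_le_sqrt (by nlinarith)
      have h3' : |y - a| ≤ Real.sqrt (r^2 - x^2) := by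
        apply abs_le_of_sq_le hu0; rw [husq]; nlinarith
      have h4' : |y + a| ≤ Real.sqrt (r^2 - x^2) := by
        apply abs_le_of_sq_le hu0; rw [husq]; nlinarith
      rw [abs_le] at h3' h4'
      have hy3 : |y| ≤ Real.sqrt (r^2 - x^2) - a := by
        rw [abs_le]; constructor
        · linarith [h4'.1]
        · linarith [h3'.2]
      have hall := le_min hy3 (le_min hy1 hy2)
      exact ⟨(abs_le.1 hall).1, (abs_le.1 hall).2⟩
    · rintro ⟨hge, hle⟩
      have habs : |y| ≤ min (Real.sqrt (r^2 - x^2) - a)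
          (min (Real.sqrt (r^2 - (x+a)^2)) (Real.sqrt (r^2 - (x-a)^2))) :=
        abs_le.2 ⟨hge, hle⟩
      have k1 := le_trans habs (min_le_left _ _)
      have k2 := le_trans habs (le_trans (min_le_right _ _) (min_le_left _ _))
      have k3 := le_trans habs (le_trans (min_le_right _ _) (min_le_right _ _))
      have k2' : y^2 ≤ r^2 - (x+a)^2 := by
        have := (Real.le_sqrt (abs_nonneg y) hA).1 k2
        rwa [sq_abs] at this
      have k3' : y^2 ≤ r^2 - (x-a)^2 := by
        have := (Real.le_sqrt (abs_nonneg y) hB).1 k3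
        rwa [sq_abs] at this
      obtain ⟨kl, kr⟩ := abs_le.1 k1
      refine ⟨by nlinarith [k3'], by nlinarith [k2'], ?_, ?_⟩
      · nlinarith [husq, mul_nonneg
          (by linarith : (0:ℝ) ≤ Real.sqrt (r^2 - x^2) - (y - a))
          (by linarith [ha0] : (0:ℝ) ≤ Real.sqrt (r^2 - x^2) + (y - a))]
      · nlinarith [husq, mul_nonneg
          (by linarith [ha0] : (0:ℝ) ≤ Real.sqrt (r^2 - x^2) - (y + a))
          (by linarith : (0:ℝ) ≤ Real.sqrt (r^2 - x^2) + (y + a))]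
  · ext y
    simp only [Set.mem_preimage, hS, Set.mem_setOf_eq, Set.mem_empty_iff_false,
      iff_false]
    rintro ⟨h1, h2, h3, h4⟩
    apply hx
    have e2 : |x + a| ≤ r := abs_le_of_sq_le hr.le (by nlinarith [sq_nonneg y])
    have e1 : |x - a| ≤ r := abs_le_of_sq_le hr.le (by nlinarith [sq_nonneg y])
    rw [abs_le] at e1 e2
    rw [Set.mem_Icc, hc]
    exact ⟨by linarith [e1.1], by linarith [e2.2]⟩

set_option maxHeartbeats 1000000 in
lemma minR_eq (r a t c : ℝ) (hr : 0 < r) (ha0 : 0 < a) (ha2 : a ^ 2 = r ^ 2 / 2)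
    (ht0 : 0 < t) (hkey : t ^ 2 + (t + a) ^ 2 = r ^ 2) (htc : t < c) (hca : c < a)
    (hc0 : 0 < c) (m : ℝ → ℝ)
    (hm : m = fun x => min (Real.sqrt (r^2 - x^2) - a)
      (min (Real.sqrt (r^2 - (x+a)^2)) (Real.sqrt (r^2 - (x-a)^2)))) :
    Set.EqOn (fun x => 2 * m x)
      (fun x => 2 * Real.sqrt (r^2 - (x+a)^2)) (Set.uIcc t c) := by
  intro x hxx
  rw [Set.uIcc_of_le htc.le, Set.mem_Icc] at hxx
  obtain ⟨hl, hrr⟩ := hxx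
  have hx0 : 0 ≤ x := le_trans ht0.le hl
  have husq : Real.sqrt (r^2 - x^2)^2 = r^2 - x^2 :=
    Real.sq_sqrt (by nlinarith [hca])
  have hu_ge : a ≤ Real.sqrt (r^2 - x^2) :=
    sub_width r a c hr ha0 ha2 hc0 hca x ⟨by linarith, hrr⟩
  have hAB : Real.sqrt (r^2 - (x+a)^2) ≤ Real.sqrt (r^2 - (x-a)^2) :=
    Real.sqrt_le_sqrt (by nlinarith)
  have hu_le : Real.sqrt (r^2 - x^2) ≤ x + a := by
    apply sqrt_le_of_le_sq (by linarith)
    nlinarith [hkey, ha2, mul_nonneg ha0.le (by linarith : (0:ℝ) ≤ x - t),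
      mul_nonneg (by linarith : (0:ℝ) ≤ x - t) (by linarith : (0:ℝ) ≤ x + t)]
  have hA_le : Real.sqrt (r^2 - (x+a)^2) ≤ Real.sqrt (r^2 - x^2) - a := by
    apply sqrt_le_of_le_sq (by linarith)
    nlinarith [husq, mul_le_mul_of_nonneg_left hu_le ha0.le]
  simp only [hm]
  rw [min_eq_left hAB, min_eq_right hA_le]

set_option maxHeartbeats 1000000 in
lemma minL_eq (r a t c : ℝ) (hr : 0 < r) (ha0 : 0 < a) (ha2 : a ^ 2 = r ^ 2 / 2)
    (ht0 : 0 < t) (hkey : t ^ 2 + (t + a) ^ 2 = r ^ 2) (htc : t < c) (hca : c < a)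
    (hc0 : 0 < c) (m : ℝ → ℝ)
    (hm : m = fun x => min (Real.sqrt (r^2 - x^2) - a)
      (min (Real.sqrt (r^2 - (x+a)^2)) (Real.sqrt (r^2 - (x-a)^2)))) :
    Set.EqOn (fun x => 2 * m x)
      (fun x => 2 * Real.sqrt (r^2 - (x-a)^2)) (Set.uIcc (-c) (-t)) := by
  intro x hxx
  rw [Set.uIcc_of_le (by linarith), Set.mem_Icc] at hxx
  obtain ⟨hl, hrr⟩ := hxx
  have hx0 : x ≤ 0 := le_trans hrr (by linarith)
  have husq : Real.sqrt (r^2 - x^2)^2 = r^2 - x^2 :=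
    Real.sq_sqrt (by nlinarith [hca])
  have hu_ge : a ≤ Real.sqrt (r^2 - x^2) :=
    sub_width r a c hr ha0 ha2 hc0 hca x ⟨hl, by linarith⟩
  have hBA : Real.sqrt (r^2 - (x-a)^2) ≤ Real.sqrt (r^2 - (x+a)^2) :=
    Real.sqrt_le_sqrt (by nlinarith)
  have hu_le : Real.sqrt (r^2 - x^2) ≤ a - x := by
    apply sqrt_le_of_le_sq (by linarith)
    nlinarith [hkey, ha2, mul_nonneg ha0.le (by linarith : (0:ℝ) ≤ -x - t),
      mul_nonneg (by linarith : (0:ℝ) ≤ -x - t) (by linarith : (0:ℝ) ≤ -x + t)]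
  have hB_le : Real.sqrt (r^2 - (x-a)^2) ≤ Real.sqrt (r^2 - x^2) - a := by
    apply sqrt_le_of_le_sq (by linarith)
    nlinarith [husq, mul_le_mul_of_nonneg_left hu_le ha0.le]
  simp only [hm]
  rw [min_eq_right hBA, min_eq_right hB_le]

set_option maxHeartbeats 1000000 in
lemma minM_eq (r a t c : ℝ) (hr : 0 < r) (ha0 : 0 < a) (ha2 : a ^ 2 = r ^ 2 / 2)
    (ht0 : 0 < t) (hkey : t ^ 2 + (t + a) ^ 2 = r ^ 2) (htc : t < c) (hca : c < a)
    (hc0 : 0 < c) (m : ℝ → ℝ)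
    (hm : m = fun x => min (Real.sqrt (r^2 - x^2) - a)
      (min (Real.sqrt (r^2 - (x+a)^2)) (Real.sqrt (r^2 - (x-a)^2)))) :
    Set.EqOn (fun x => 2 * m x)
      (fun x => 2 * (Real.sqrt (r^2 - x^2) - a)) (Set.uIcc (-t) t) := by
  intro x hxx
  rw [Set.uIcc_of_le (by linarith), Set.mem_Icc] at hxx
  obtain ⟨hl, hrr⟩ := hxx
  have hxt2 : x^2 ≤ t^2 := by nlinarith
  have husq : Real.sqrt (r^2 - x^2)^2 = r^2 - x^2 :=
    Real.sq_sqrt (by nlinarith [hca, htc])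
  have hu_ge : a ≤ Real.sqrt (r^2 - x^2) :=
    sub_width r a c hr ha0 ha2 hc0 hca x ⟨by linarith, by linarith⟩
  have hxa_le_u : x + a ≤ Real.sqrt (r^2 - x^2) := by
    apply le_sqrt_of_sq_le (by linarith [htc, hca])
    nlinarith [hkey, ha2, hxt2, mul_le_mul_of_nonneg_left hrr ha0.le]
  have hax_le_u : a - x ≤ Real.sqrt (r^2 - x^2) := by
    apply le_sqrt_of_sq_le (by linarith [htc, hca])
    nlinarith [hkey, ha2, hxt2, mul_le_mul_of_nonneg_left hl ha0.le]
  have hA : Real.sqrt (r^2 - x^2) - a ≤ Real.sqrt (r^2 - (x+a)^2) := by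
    apply le_sqrt_of_sq_le (by linarith)
    nlinarith [husq, mul_le_mul_of_nonneg_left hxa_le_u ha0.le]
  have hB : Real.sqrt (r^2 - x^2) - a ≤ Real.sqrt (r^2 - (x-a)^2) := by
    apply le_sqrt_of_sq_le (by linarith)
    nlinarith [husq, mul_le_mul_of_nonneg_left hax_le_u ha0.le]
  simp only [hm]
  rw [min_eq_left (le_min hA hB)]

set_option maxHeartbeats 1000000 in
lemma width_integral (r a t c : ℝ) (hr : 0 < r) (ha : a = r / Real.sqrt 2)
    (ht : t = a * (Real.sqrt 3 - 1) / 2) (hc : c = r - a)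
    (m : ℝ → ℝ)
    (hm : m = fun x => min (Real.sqrt (r^2 - x^2) - a)
      (min (Real.sqrt (r^2 - (x+a)^2)) (Real.sqrt (r^2 - (x-a)^2)))) :
    ∫ x in Set.Icc (-c) c, 2 * m x = (π / 3 + 1 - Real.sqrt 3) * r ^ 2 := by
  have hpi := Real.pi_pos
  obtain ⟨ha0, ha2, ht0, hc0, hkey, htc, hca, hra, hta⟩ :=
    basic_facts r a t c hr ha ht hc
  have hm_cont : Continuous m := by
    rw [hm]
    apply Continuous.min
    · exact (Real.continuous_sqrt.comp (by fun_prop)).sub continuous_const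
    · exact Continuous.min (Real.continuous_sqrt.comp (by fun_prop))
        (Real.continuous_sqrt.comp (by fun_prop))
  have hint : ∀ u v : ℝ, IntervalIntegrable (fun x => 2 * m x) volume u v :=
    fun u v => (continuous_const.mul hm_cont).intervalIntegrable u v
  rw [MeasureTheory.integral_Icc_eq_integral_Ioc,
    ← intervalIntegral.integral_of_le (by linarith : -c ≤ c),
    ← intervalIntegral.integral_add_adjacent_intervals (hint (-c) t) (hint t c),
    ← intervalIntegral.integral_add_adjacent_intervals (hint (-c) (-t)) (hint (-t) t)]
  have hP1 : ∫ x in t..c, 2 * m x = 2*(sF r r - sF r (t+a)) := by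
    rw [intervalIntegral.integral_congr
        (minR_eq r a t c hr ha0 ha2 ht0 hkey htc hca hc0 m hm),
      intervalIntegral.integral_const_mul,
      intervalIntegral.integral_comp_add_right (fun u => Real.sqrt (r^2 - u^2)) a,
      show c + a = r from by rw [hc]; ring,
      integral_sqrt_rsq r hr (by nlinarith [ht0, ha0]) (by linarith) le_rfl]
  have hP3 : ∫ x in (-c)..(-t), 2 * m x = 2*(sF r r - sF r (t+a)) := by
    rw [intervalIntegral.integral_congr
        (minL_eq r a t c hr ha0 ha2 ht0 hkey htc hca hc0 m hm),
      intervalIntegral.integral_const_mul,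
      intervalIntegral.integral_comp_sub_right (fun u => Real.sqrt (r^2 - u^2)) a,
      show -c - a = -r from by rw [hc]; ring,
      integral_sqrt_rsq r hr le_rfl (by linarith) (by nlinarith [ht0, ha0]),
      show -t - a = -(t+a) from by ring, sF_neg, sF_neg]
    ring
  have hP2 : ∫ x in (-t)..t, 2 * m x = 2*(2*sF r t - 2*a*t) := by
    rw [intervalIntegral.integral_congr
        (minM_eq r a t c hr ha0 ha2 ht0 hkey htc hca hc0 m hm),
      intervalIntegral.integral_const_mul,
      intervalIntegral.integral_sub
        ((by fun_prop : Continuous fun x : ℝ => Real.sqrt (r^2 - x^2)).intervalIntegrable _ _)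
        intervalIntegrable_const,
      integral_sqrt_rsq r hr (by linarith) (by linarith) (by linarith),
      intervalIntegral.integral_const, sF_neg]
    simp only [smul_eq_mul]
    ring
  rw [hP1, hP2, hP3]
  have hsFr : sF r r = r^2 * (π/2) / 2 := by
    simp only [sF]
    rw [show r^2 - r^2 = (0:ℝ) by ring, Real.sqrt_zero, div_self hr.ne',
      Real.arcsin_one]
    ring
  have hsqt : Real.sqrt (r^2 - t^2) = t + a := by
    rw [show r^2 - t^2 = (t+a)^2 by linarith [hkey], Real.sqrt_sq (by positivity)]
  have hsqta : Real.sqrt (r^2 - (t+a)^2) = t := by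
    rw [show r^2 - (t+a)^2 = t^2 by linarith [hkey], Real.sqrt_sq ht0.le]
  have hdiv1 : t / r = (Real.sqrt 3 - 1) / (2*Real.sqrt 2) := by
    rw [ht, ha]; field_simp
  have hdiv2 : (t+a) / r = (Real.sqrt 3 + 1) / (2*Real.sqrt 2) := by
    rw [ht, ha]; field_simp; ring
  have hsFt : sF r t = (t*(t+a) + r^2 * (π/12))/2 := by
    simp only [sF]
    rw [hsqt, hdiv1, arcsin_pi12]
  have hsFta : sF r (t+a) = ((t+a)*t + r^2 * (5*π/12))/2 := by
    simp only [sF]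
    rw [hsqta, hdiv2, arcsin_5pi12]
  rw [hsFr, hsFt, hsFta]
  have hat : a * t = r^2 * (Real.sqrt 3 - 1) / 4 := by
    rw [ht]
    linear_combination ((Real.sqrt 3 - 1)/2) * ha2
  linear_combination (-4 : ℝ) * hat

end Main

set_option maxHeartbeats 1000000 in
/-- The area of the curvilinear square of curvature radius `r` (the intersection of
the four closed disks of radius `r` centered at `(±r/√2, 0)` and `(0, ±r/√2)`)
equals `(π/3 + 1 − √3)·r²`. -/
theorem stmt_4 (r : ℝ) (hr : 0 < r) (E : Set (EuclideanSpace ℝ (Fin 2)))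
    (hE : E = Metric.closedBall (pt (r / Real.sqrt 2) 0) r ∩
      Metric.closedBall (pt (-(r / Real.sqrt 2)) 0) r ∩
      Metric.closedBall (pt 0 (r / Real.sqrt 2)) r ∩
      Metric.closedBall (pt 0 (-(r / Real.sqrt 2))) r) :
    volume E = ENNReal.ofReal ((π / 3 + 1 - Real.sqrt 3) * r ^ 2) := by
  set a := r / Real.sqrt 2 with ha
  set t := a * (Real.sqrt 3 - 1) / 2 with ht
  set c := r - a with hc
  obtain ⟨ha0, ha2, ht0, hc0, hkey, htc, hca, hra, hta⟩ :=
    basic_facts r a t c hr ha ht hc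
  set S : Set (ℝ × ℝ) := {q | (q.1 - a)^2 + q.2^2 ≤ r^2 ∧ (q.1 + a)^2 + q.2^2 ≤ r^2 ∧
      q.1^2 + (q.2 - a)^2 ≤ r^2 ∧ q.1^2 + (q.2 + a)^2 ≤ r^2} with hS
  have hSm : MeasurableSet S := by
    rw [hS]
    simp only [Set.setOf_and]
    refine MeasurableSet.inter ?_ (MeasurableSet.inter ?_ (MeasurableSet.inter ?_ ?_)) <;>
      exact measurableSet_le (by fun_prop) (by fun_prop)
  have hphi : MeasurePreserving (fun p : EuclideanSpace ℝ (Fin 2) => ((p 0 : ℝ), p 1))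
      volume volume :=
    (MeasureTheory.volume_preserving_finTwoArrow ℝ).comp
      (EuclideanSpace.volume_preserving_symm_measurableEquiv_toLp (Fin 2))
  have hdist : ∀ (p : EuclideanSpace ℝ (Fin 2)) (u v : ℝ),
      dist p (pt u v) ≤ r ↔ (p 0 - u)^2 + (p 1 - v)^2 ≤ r^2 := by
    intro p u v
    rw [EuclideanSpace.dist_eq,
      show ∑ i, dist (p i) (pt u v i) ^ 2 = (p 0 - u)^2 + (p 1 - v)^2 from by
        simp [Fin.sum_univ_two, pt, Real.dist_eq, sq_abs],
      show r = Real.sqrt (r^2) from (Real.sqrt_sq hr.le).symm,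
      Real.sqrt_le_sqrt_iff (by positivity)]
    rw [Real.sqrt_sq hr.le]
  have hES : E = (fun p : EuclideanSpace ℝ (Fin 2) => ((p 0 : ℝ), p 1)) ⁻¹' S := by
    rw [hE]; ext p
    simp only [Set.mem_inter_iff, Metric.mem_closedBall, Set.mem_preimage, hS,
      Set.mem_setOf_eq]
    rw [hdist, hdist, hdist, hdist]
    constructor
    · rintro ⟨⟨⟨h1, h2⟩, h3⟩, h4⟩
      refine ⟨by linarith [h1], by linarith [h2], by linarith [h3], by linarith [h4]⟩
    · rintro ⟨h1, h2, h3, h4⟩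
      refine ⟨⟨⟨by linarith [h1], by linarith [h2]⟩, by linarith [h3]⟩, by linarith [h4]⟩
  set m : ℝ → ℝ := fun x => min (Real.sqrt (r^2 - x^2) - a)
      (min (Real.sqrt (r^2 - (x+a)^2)) (Real.sqrt (r^2 - (x-a)^2))) with hm
  have hm_cont : Continuous m := by
    rw [hm]
    apply Continuous.min
    · exact (Real.continuous_sqrt.comp (by fun_prop)).sub continuous_const
    · exact Continuous.min (Real.continuous_sqrt.comp (by fun_prop))
        (Real.continuous_sqrt.comp (by fun_prop))
  have hm_nonneg : ∀ x ∈ Set.Icc (-c) c, 0 ≤ m x := by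
    intro x hx
    simp only [hm]
    exact le_min (by linarith [sub_width r a c hr ha0 ha2 hc0 hca x hx])
      (le_min (Real.sqrt_nonneg _) (Real.sqrt_nonneg _))
  have hsec := sec_eq r a t c hr ha0 ha2 ht0 hc0 hca hc S hS m hm
  have hvol : volume S = ∫⁻ x in Set.Icc (-c) c, ENNReal.ofReal (2 * m x) := by
    rw [MeasureTheory.Measure.volume_eq_prod, MeasureTheory.Measure.prod_apply hSm,
      ← MeasureTheory.lintegral_indicator measurableSet_Icc]
    congr 1
    funext x
    rw [hsec x]
    by_cases hx : x ∈ Set.Icc (-c) c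
    · rw [if_pos hx, Set.indicator_of_mem hx, Real.volume_Icc]
      congr 1
      ring
    · rw [if_neg hx, Set.indicator_of_notMem hx, measure_empty]
  have hIoo : ∫⁻ x in Set.Icc (-c) c, ENNReal.ofReal (2 * m x)
      = ENNReal.ofReal (∫ x in Set.Icc (-c) c, 2 * m x) := by
    rw [← MeasureTheory.ofReal_integral_eq_lintegral_ofReal]
    · exact ((continuous_const.mul hm_cont).continuousOn).integrableOn_Icc
    · filter_upwards [MeasureTheory.ae_restrict_mem measurableSet_Icc] with x hx
      exact mul_nonneg (by norm_num) (hm_nonneg x hx)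
  calc volume E = volume S := by
        rw [hES]; exact hphi.measure_preimage hSm.nullMeasurableSet
    _ = ENNReal.ofReal ((π / 3 + 1 - Real.sqrt 3) * r ^ 2) := by
        rw [hvol, hIoo, width_integral r a t c hr ha ht hc m hm]
end

section
/- Let u > 0, v > 0 and w be real numbers, and set A = (0,0), B = (u,0), C = (w,v) in ℝ². Suppose S ∈ ℝ² is a point distinct from A, B, C lying in the interior of the triangle ABC such that the three (unoriented) angles ∠ASB, ∠BSC and ∠CSA are each equal to 2π/3. Then dist(A,S) + dist(B,S) + dist(C,S) = √((w − u/2)² + (v + (√3/2)u)²). (The length of the Steiner tripod with ends A, B, C equals the distance from C to the apex M = (u/2, −(√3/2)u) of the equilateral triangle erected on the segment AB on the side opposite to C — Melzak's construction.) -/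
set_option maxHeartbeats 1000000


open Real EuclideanGeometry
open scoped RealInnerProductSpace

private lemma hull_halfplane (c0 c1 d : ℝ) (A B C S : EuclideanSpace ℝ (Fin 2))
    (hA : d ≤ c0 * A 0 + c1 * A 1) (hB : d ≤ c0 * B 0 + c1 * B 1)
    (hC : d ≤ c0 * C 0 + c1 * C 1)
    (hS : S ∈ convexHull ℝ ({A, B, C} : Set (EuclideanSpace ℝ (Fin 2)))) :
    d ≤ c0 * S 0 + c1 * S 1 := by
  have : convexHull ℝ ({A, B, C} : Set (EuclideanSpace ℝ (Fin 2))) ⊆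
      {p : EuclideanSpace ℝ (Fin 2) | d ≤ c0 * p 0 + c1 * p 1} := by
    apply convexHull_min
    · rintro p (rfl | rfl | rfl) <;> assumption
    · intro p hp q hq a b ha hb hab
      simp only [Set.mem_setOf_eq] at *
      have h0 : (a • p + b • q) 0 = a * p 0 + b * q 0 := by
        simp [PiLp.add_apply, PiLp.smul_apply, smul_eq_mul]
      have h1 : (a • p + b • q) 1 = a * p 1 + b * q 1 := by
        simp [PiLp.add_apply, PiLp.smul_apply, smul_eq_mul]
      rw [h0, h1]
      have hd : a * d + b * d = d := by rw [← add_mul, hab, one_mul]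
      nlinarith [mul_le_mul_of_nonneg_left hp ha, mul_le_mul_of_nonneg_left hq hb]
  exact this hS

private lemma pt_apply0 (x y : ℝ) : pt x y 0 = x := rfl
private lemma pt_apply1 (x y : ℝ) : pt x y 1 = y := rfl

/-- The key real-number computation. -/
private lemma steiner_arith (u v w x y a b c : ℝ) (hu : 0 < u) (hv : 0 < v)
    (hapos : 0 < a) (hbpos : 0 < b) (hcpos : 0 < c)
    (ha2 : a ^ 2 = x ^ 2 + y ^ 2)
    (hb2 : b ^ 2 = (u - x) ^ 2 + y ^ 2)
    (hc2 : c ^ 2 = (w - x) ^ 2 + (v - y) ^ 2)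
    (hab : a * b = -2 * (x ^ 2 - u * x + y ^ 2))
    (hbc : b * c = -2 * (u * w - (u + w) * x + x ^ 2 - v * y + y ^ 2))
    (hca : c * a = -2 * (x ^ 2 - w * x + y ^ 2 - v * y))
    (hc1 : 0 ≤ u * y)
    (hc2' : 0 ≤ u * v - v * x + (w - u) * y)
    (hc3 : 0 ≤ v * x - w * y) :
    a + b + c = Real.sqrt ((w - u / 2) ^ 2 + (v + Real.sqrt 3 / 2 * u) ^ 2) := by
  have hs3 : Real.sqrt 3 ^ 2 = 3 := Real.sq_sqrt (by norm_num)
  have hs3nn : (0:ℝ) ≤ Real.sqrt 3 := Real.sqrt_nonneg 3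
  have q1 : (u * y) ^ 2 = 3 * (x ^ 2 - u * x + y ^ 2) ^ 2 := by
    have h : (a * b) ^ 2 = (x ^ 2 + y ^ 2) * ((u - x) ^ 2 + y ^ 2) := by
      rw [mul_pow, ha2, hb2]
    linear_combination (-1 : ℝ) * h + (a * b - 2 * (x ^ 2 - u * x + y ^ 2)) * hab
  have q2 : (u * v - v * x + (w - u) * y) ^ 2 =
      3 * (u * w - (u + w) * x + x ^ 2 - v * y + y ^ 2) ^ 2 := by
    have h : (b * c) ^ 2 = ((u - x) ^ 2 + y ^ 2) * ((w - x) ^ 2 + (v - y) ^ 2) := by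
      rw [mul_pow, hb2, hc2]
    linear_combination (-1 : ℝ) * h
      + (b * c - 2 * (u * w - (u + w) * x + x ^ 2 - v * y + y ^ 2)) * hbc
  have q3 : (v * x - w * y) ^ 2 = 3 * (x ^ 2 - w * x + y ^ 2 - v * y) ^ 2 := by
    have h : (c * a) ^ 2 = ((w - x) ^ 2 + (v - y) ^ 2) * (x ^ 2 + y ^ 2) := by
      rw [mul_pow, hc2, ha2]
    linear_combination (-1 : ℝ) * h + (c * a - 2 * (x ^ 2 - w * x + y ^ 2 - v * y)) * hca
  -- the three cross-product equalities
  have e1 : u * y = Real.sqrt 3 * (-(x ^ 2 - u * x + y ^ 2)) := by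
    have h0 : 0 ≤ -(x ^ 2 - u * x + y ^ 2) := by linarith [mul_pos hapos hbpos, hab]
    have hnn : 0 ≤ Real.sqrt 3 * (-(x ^ 2 - u * x + y ^ 2)) := mul_nonneg hs3nn h0
    have hsq : (u * y) ^ 2 = (Real.sqrt 3 * (-(x ^ 2 - u * x + y ^ 2))) ^ 2 := by
      linear_combination q1 - (x ^ 2 - u * x + y ^ 2) ^ 2 * hs3
    exact (sq_eq_sq₀ hc1 hnn).mp hsq
  have e2 : u * v - v * x + (w - u) * y =
      Real.sqrt 3 * (-(u * w - (u + w) * x + x ^ 2 - v * y + y ^ 2)) := by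
    have h0 : 0 ≤ -(u * w - (u + w) * x + x ^ 2 - v * y + y ^ 2) := by
      linarith [mul_pos hbpos hcpos, hbc]
    have hnn : 0 ≤ Real.sqrt 3 * (-(u * w - (u + w) * x + x ^ 2 - v * y + y ^ 2)) :=
      mul_nonneg hs3nn h0
    have hsq : (u * v - v * x + (w - u) * y) ^ 2 =
        (Real.sqrt 3 * (-(u * w - (u + w) * x + x ^ 2 - v * y + y ^ 2))) ^ 2 := by
      linear_combination q2 - (u * w - (u + w) * x + x ^ 2 - v * y + y ^ 2) ^ 2 * hs3
    exact (sq_eq_sq₀ hc2' hnn).mp hsq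
  have e3 : v * x - w * y = Real.sqrt 3 * (-(x ^ 2 - w * x + y ^ 2 - v * y)) := by
    have h0 : 0 ≤ -(x ^ 2 - w * x + y ^ 2 - v * y) := by linarith [mul_pos hcpos hapos, hca]
    have hnn : 0 ≤ Real.sqrt 3 * (-(x ^ 2 - w * x + y ^ 2 - v * y)) := mul_nonneg hs3nn h0
    have hsq : (v * x - w * y) ^ 2 =
        (Real.sqrt 3 * (-(x ^ 2 - w * x + y ^ 2 - v * y))) ^ 2 := by
      linear_combination q3 - (x ^ 2 - w * x + y ^ 2 - v * y) ^ 2 * hs3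
    exact (sq_eq_sq₀ hc3 hnn).mp hsq
  -- summing the three cross relations
  have huv : u * v = Real.sqrt 3 *
      (-(x ^ 2 - u * x + y ^ 2) + -(u * w - (u + w) * x + x ^ 2 - v * y + y ^ 2)
        + -(x ^ 2 - w * x + y ^ 2 - v * y)) := by
    linear_combination e1 + e2 + e3
  have hkey : Real.sqrt 3 * (u * v) =
      -3 * ((x ^ 2 - u * x + y ^ 2) + (u * w - (u + w) * x + x ^ 2 - v * y + y ^ 2)
        + (x ^ 2 - w * x + y ^ 2 - v * y)) := by
    linear_combination Real.sqrt 3 * huv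
      + (-(x ^ 2 - u * x + y ^ 2) + -(u * w - (u + w) * x + x ^ 2 - v * y + y ^ 2)
        + -(x ^ 2 - w * x + y ^ 2 - v * y)) * hs3
  have hsum2 : (a + b + c) ^ 2 = (w - u / 2) ^ 2 + (v + Real.sqrt 3 / 2 * u) ^ 2 := by
    have hexp : (a + b + c) ^ 2 = a ^ 2 + b ^ 2 + c ^ 2
        + 2 * (a * b) + 2 * (b * c) + 2 * (c * a) := by ring
    rw [hexp, ha2, hb2, hc2, hab, hbc, hca]
    linear_combination (-1 : ℝ) * hkey - u ^ 2 / 4 * hs3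
  calc a + b + c = Real.sqrt ((a + b + c) ^ 2) := (Real.sqrt_sq (by positivity)).symm
    _ = _ := by rw [hsum2]

/-- Length of a Steiner tripod (Melzak's construction): if `S` is a point interior to
the triangle with vertices `A = (0,0)`, `B = (u,0)`, `C = (w,v)` at which the three
segments `AS`, `BS`, `CS` meet pairwise at angles of 120°, then the total length of
the tripod equals `√((w − u/2)² + (v + (√3/2)u)²)`. -/
theorem stmt_5 (u v w : ℝ) (hu : 0 < u) (hv : 0 < v)
    (A B C S : EuclideanSpace ℝ (Fin 2))
    (hA : A = pt 0 0) (hB : B = pt u 0) (hC : C = pt w v)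
    (hSA : S ≠ A) (hSB : S ≠ B) (hSC : S ≠ C)
    (hSint : S ∈ interior (convexHull ℝ ({A, B, C} : Set (EuclideanSpace ℝ (Fin 2)))))
    (h1 : ∠ A S B = 2 * π / 3) (h2 : ∠ B S C = 2 * π / 3)
    (h3 : ∠ C S A = 2 * π / 3) :
    dist A S + dist B S + dist C S =
      Real.sqrt ((w - u / 2) ^ 2 + (v + Real.sqrt 3 / 2 * u) ^ 2) := by
  subst hA hB hC
  obtain ⟨x, hxdef⟩ : ∃ t : ℝ, t = S 0 := ⟨S 0, rfl⟩
  obtain ⟨y, hydef⟩ : ∃ t : ℝ, t = S 1 := ⟨S 1, rfl⟩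
  -- sign information from the convex hull
  have hS' : S ∈ convexHull ℝ ({pt 0 0, pt u 0, pt w v} : Set (EuclideanSpace ℝ (Fin 2))) :=
    interior_subset hSint
  have hc1 : 0 ≤ u * y := by
    have h := hull_halfplane 0 u 0 (pt 0 0) (pt u 0) (pt w v) S
      (by simp only [pt_apply0, pt_apply1]; nlinarith)
      (by simp only [pt_apply0, pt_apply1]; nlinarith)
      (by simp only [pt_apply0, pt_apply1]; nlinarith) hS'
    rw [← hxdef, ← hydef] at h
    linarith [h]
  have hc2' : 0 ≤ u * v - v * x + (w - u) * y := by
    have h := hull_halfplane (-v) (w - u) (-(u * v)) (pt 0 0) (pt u 0) (pt w v) S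
      (by simp only [pt_apply0, pt_apply1]; nlinarith)
      (by simp only [pt_apply0, pt_apply1]; nlinarith)
      (by simp only [pt_apply0, pt_apply1]; nlinarith) hS'
    rw [← hxdef, ← hydef] at h
    linarith [h]
  have hc3 : 0 ≤ v * x - w * y := by
    have h := hull_halfplane v (-w) 0 (pt 0 0) (pt u 0) (pt w v) S
      (by simp only [pt_apply0, pt_apply1]; nlinarith)
      (by simp only [pt_apply0, pt_apply1]; nlinarith)
      (by simp only [pt_apply0, pt_apply1]; nlinarith) hS'
    rw [← hxdef, ← hydef] at h
    linarith [h]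
  clear hSint hS'
  obtain ⟨a, hadef⟩ : ∃ t : ℝ, t = ‖pt 0 0 - S‖ := ⟨_, rfl⟩
  obtain ⟨b, hbdef⟩ : ∃ t : ℝ, t = ‖pt u 0 - S‖ := ⟨_, rfl⟩
  obtain ⟨c, hcdef⟩ : ∃ t : ℝ, t = ‖pt w v - S‖ := ⟨_, rfl⟩
  have hinner : ∀ p q r s : ℝ, ⟪pt p q - S, pt r s - S⟫ =
      (p - x) * (r - x) + (q - y) * (s - y) := by
    intro p q r s
    rw [hxdef, hydef]
    simp [pt, PiLp.inner_apply, Fin.sum_univ_two, RCLike.inner_apply]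
    ring
  have ha2 : a ^ 2 = x ^ 2 + y ^ 2 := by
    rw [hadef, ← real_inner_self_eq_norm_sq, hinner]; ring
  have hb2 : b ^ 2 = (u - x) ^ 2 + y ^ 2 := by
    rw [hbdef, ← real_inner_self_eq_norm_sq, hinner]; ring
  have hc2 : c ^ 2 = (w - x) ^ 2 + (v - y) ^ 2 := by
    rw [hcdef, ← real_inner_self_eq_norm_sq, hinner]; ring
  have hapos : 0 < a := by
    rw [hadef, norm_pos_iff]; exact sub_ne_zero_of_ne (Ne.symm hSA)
  have hbpos : 0 < b := by
    rw [hbdef, norm_pos_iff]; exact sub_ne_zero_of_ne (Ne.symm hSB)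
  have hcpos : 0 < c := by
    rw [hcdef, norm_pos_iff]; exact sub_ne_zero_of_ne (Ne.symm hSC)
  have hcos : Real.cos (2 * π / 3) = -(1 / 2) := by
    rw [show (2 * π / 3 : ℝ) = π - π / 3 by ring, Real.cos_pi_sub, Real.cos_pi_div_three]
  -- the three inner-product relations from the 120° angles
  have hab : a * b = -2 * (x ^ 2 - u * x + y ^ 2) := by
    have h := InnerProductGeometry.cos_angle (pt 0 0 - S) (pt u 0 - S)
    rw [show InnerProductGeometry.angle (pt 0 0 - S) (pt u 0 - S)
        = ∠ (pt 0 0) S (pt u 0) from rfl, h1, hcos, ← hadef, ← hbdef, hinner] at h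
    have h' := (div_eq_iff (ne_of_gt (mul_pos hapos hbpos))).mp h.symm
    linear_combination 2 * h'
  have hbc : b * c = -2 * (u * w - (u + w) * x + x ^ 2 - v * y + y ^ 2) := by
    have h := InnerProductGeometry.cos_angle (pt u 0 - S) (pt w v - S)
    rw [show InnerProductGeometry.angle (pt u 0 - S) (pt w v - S)
        = ∠ (pt u 0) S (pt w v) from rfl, h2, hcos, ← hbdef, ← hcdef, hinner] at h
    have h' := (div_eq_iff (ne_of_gt (mul_pos hbpos hcpos))).mp h.symm
    linear_combination 2 * h'
  have hca : c * a = -2 * (x ^ 2 - w * x + y ^ 2 - v * y) := by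
    have h := InnerProductGeometry.cos_angle (pt w v - S) (pt 0 0 - S)
    rw [show InnerProductGeometry.angle (pt w v - S) (pt 0 0 - S)
        = ∠ (pt w v) S (pt 0 0) from rfl, h3, hcos, ← hcdef, ← hadef, hinner] at h
    have h' := (div_eq_iff (ne_of_gt (mul_pos hcpos hapos))).mp h.symm
    linear_combination 2 * h'
  have hda : dist (pt 0 0) S = a := by rw [hadef]; exact dist_eq_norm _ _
  have hdb : dist (pt u 0) S = b := by rw [hbdef]; exact dist_eq_norm _ _
  have hdc : dist (pt w v) S = c := by rw [hcdef]; exact dist_eq_norm _ _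
  rw [hda, hdb, hdc]
  exact steiner_arith u v w x y a b c hu hv hapos hbpos hcpos ha2 hb2 hc2
    hab hbc hca hc1 hc2' hc3
end

section
/- Define m₁ = √2·√(π − √3), q₁ = 12^(1/4), m₂ = 2·√(π/3 + 1 − √3), q₂ = 2, q₃ = 2·3^(1/4), x₁ = ((q₂ − q₁)/(m₁ − m₂))² and x₂ = ((q₃ − q₂)/m₂)². Then for every x ∈ [0, 1/2]: min{ m₁·√x + q₁, m₂·√x + q₂, q₃ } equals m₁·√x + q₁ if x ∈ [0, x₁], equals m₂·√x + q₂ if x ∈ [x₁, x₂], and equals q₃ if x ∈ [x₂, 1/2]. Moreover the inequalities are strict in the interior of each interval: for x ∈ (0, x₁) one has m₁√x + q₁ < m₂√x + q₂ and m₁√x + q₁ < q₃; for x ∈ (x₁, x₂) one has m₂√x + q₂ < m₁√x + q₁ and m₂√x + q₂ < q₃; for x ∈ (x₂, 1/2] one has q₃ < m₁√x + q₁ and q₃ < m₂√x + q₂. -/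
open Real

lemma aux_sqrt3 : (1.7320 : ℝ) < Real.sqrt 3 ∧ Real.sqrt 3 < 1.7321 := by
  have h3 : Real.sqrt 3 ^ 2 = 3 := Real.sq_sqrt (by norm_num)
  have h3nn : (0:ℝ) ≤ Real.sqrt 3 := Real.sqrt_nonneg 3
  constructor <;> nlinarith

lemma aux_pi : (3.141592 : ℝ) < π ∧ π < 3.141593 :=
  ⟨by have := Real.pi_gt_d6; linarith, by have := Real.pi_lt_d6; linarith⟩

lemma aux_fourth (a : ℝ) (ha : 0 < a) (h4 : a ^ 4 = 12) : 1.86 < a ∧ a < 1.87 := by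
  constructor
  · nlinarith [sq_nonneg (a - 1.86), sq_nonneg (a + 1.86), sq_nonneg (a^2 - 3.4596)]
  · nlinarith [sq_nonneg (a - 1.87), sq_nonneg (a + 1.87), sq_nonneg (a^2 - 3.4969)]

lemma aux_fourth3 (a : ℝ) (ha : 0 < a) (h4 : a ^ 4 = 3) : 1.31 < a ∧ a < 1.32 := by
  constructor
  · nlinarith [sq_nonneg (a - 1.31), sq_nonneg (a + 1.31), sq_nonneg (a^2 - 1.7161)]
  · nlinarith [sq_nonneg (a - 1.32), sq_nonneg (a + 1.32), sq_nonneg (a^2 - 1.7424)]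

lemma aux_sq_lb (a c : ℝ) (hc : 0 ≤ c) (ha : 0 ≤ a) (h : c ^ 2 < a ^ 2) : c < a := by
  nlinarith

lemma aux_sq_ub (a c : ℝ) (hc : 0 ≤ c) (ha : 0 ≤ a) (h : a ^ 2 < c ^ 2) : a < c := by
  nlinarith

lemma aux_t12 (m₁ m₂ q₁ q₃ : ℝ) (h1 : 1.67 < m₁) (h2 : 1.12 < m₂) (h2u : m₂ < 1.13)
    (hq1 : 1.86 < q₁) (hq1u : q₁ < 1.87) (hq3 : 2.62 < q₃) :
    (2 - q₁) * m₂ ≤ (q₃ - 2) * (m₁ - m₂) := by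
  nlinarith

set_option maxHeartbeats 1000000 in
/-- Piecewise description of the isoperimetric profile
`ℐ(x) = min{m₁√x + q₁, m₂√x + q₂, q₃}` on `[0, 1/2]`: the minimum is attained by
`m₁√x + q₁` on `[0, x₁]`, by `m₂√x + q₂` on `[x₁, x₂]`, and by `q₃` on `[x₂, 1/2]`,
with strict inequalities in the interior of each interval. -/
theorem stmt_10 (m₁ q₁ m₂ q₂ q₃ x₁ x₂ : ℝ)
    (hm₁ : m₁ = Real.sqrt 2 * Real.sqrt (π - Real.sqrt 3))
    (hq₁ : q₁ = (12 : ℝ) ^ ((1 : ℝ) / 4))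
    (hm₂ : m₂ = 2 * Real.sqrt (π / 3 + 1 - Real.sqrt 3))
    (hq₂ : q₂ = 2)
    (hq₃ : q₃ = 2 * (3 : ℝ) ^ ((1 : ℝ) / 4))
    (hx₁ : x₁ = ((q₂ - q₁) / (m₁ - m₂)) ^ 2)
    (hx₂ : x₂ = ((q₃ - q₂) / m₂) ^ 2) :
    ∀ x ∈ Set.Icc (0 : ℝ) (1 / 2),
      (x ∈ Set.Icc 0 x₁ →
        min (min (m₁ * Real.sqrt x + q₁) (m₂ * Real.sqrt x + q₂)) q₃
          = m₁ * Real.sqrt x + q₁) ∧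
      (x ∈ Set.Icc x₁ x₂ →
        min (min (m₁ * Real.sqrt x + q₁) (m₂ * Real.sqrt x + q₂)) q₃
          = m₂ * Real.sqrt x + q₂) ∧
      (x ∈ Set.Icc x₂ (1 / 2) →
        min (min (m₁ * Real.sqrt x + q₁) (m₂ * Real.sqrt x + q₂)) q₃ = q₃) ∧
      (x ∈ Set.Ioo 0 x₁ →
        m₁ * Real.sqrt x + q₁ < m₂ * Real.sqrt x + q₂ ∧
        m₁ * Real.sqrt x + q₁ < q₃) ∧
      (x ∈ Set.Ioo x₁ x₂ →
        m₂ * Real.sqrt x + q₂ < m₁ * Real.sqrt x + q₁ ∧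
        m₂ * Real.sqrt x + q₂ < q₃) ∧
      (x ∈ Set.Ioc x₂ (1 / 2) →
        q₃ < m₁ * Real.sqrt x + q₁ ∧ q₃ < m₂ * Real.sqrt x + q₂) := by
  obtain ⟨h3l, h3u⟩ := aux_sqrt3
  obtain ⟨hpil, hpiu⟩ := aux_pi
  have h3nn : (0:ℝ) ≤ Real.sqrt 3 := Real.sqrt_nonneg 3
  have hm1sq : m₁ ^ 2 = 2 * (π - Real.sqrt 3) := by
    rw [hm₁, mul_pow, Real.sq_sqrt (by norm_num : (0:ℝ) ≤ 2),
      Real.sq_sqrt (by nlinarith : (0:ℝ) ≤ π - Real.sqrt 3)]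
  have hm1nn : 0 ≤ m₁ := by rw [hm₁]; positivity
  have hm1l : (1.67 : ℝ) < m₁ :=
    aux_sq_lb _ _ (by norm_num) hm1nn (by rw [hm1sq]; nlinarith)
  have hm1u : m₁ < 1.68 :=
    aux_sq_ub _ _ (by norm_num) hm1nn (by rw [hm1sq]; nlinarith)
  have hm2sq : m₂ ^ 2 = 4 * (π / 3 + 1 - Real.sqrt 3) := by
    rw [hm₂, mul_pow, Real.sq_sqrt (by nlinarith : (0:ℝ) ≤ π / 3 + 1 - Real.sqrt 3)]
    ring
  have hm2nn : 0 ≤ m₂ := by rw [hm₂]; positivity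
  have hm2l : (1.12 : ℝ) < m₂ :=
    aux_sq_lb _ _ (by norm_num) hm2nn (by rw [hm2sq]; nlinarith)
  have hm2u : m₂ < 1.13 :=
    aux_sq_ub _ _ (by norm_num) hm2nn (by rw [hm2sq]; nlinarith)
  have hm2pos : 0 < m₂ := by linarith
  have hq1_4 : q₁ ^ 4 = 12 := by
    rw [hq₁, ← Real.rpow_natCast _ 4, ← Real.rpow_mul (by norm_num : (0:ℝ) ≤ 12)]
    norm_num
  have hq1pos : 0 < q₁ := by rw [hq₁]; positivity
  obtain ⟨hq1l, hq1u⟩ := aux_fourth q₁ hq1pos hq1_4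
  have hr4 : ((3:ℝ) ^ ((1:ℝ)/4)) ^ 4 = 3 := by
    rw [← Real.rpow_natCast _ 4, ← Real.rpow_mul (by norm_num : (0:ℝ) ≤ 3)]
    norm_num
  obtain ⟨hrl, hru⟩ := aux_fourth3 _ (by positivity) hr4
  have hq3l : (2.62 : ℝ) < q₃ := by rw [hq₃]; linarith
  have hq3u : q₃ < 2.64 := by rw [hq₃]; linarith
  have hd : 0 < m₁ - m₂ := by linarith
  have he₁ : 0 < q₂ - q₁ := by rw [hq₂]; linarith
  have he₂ : 0 < q₃ - q₂ := by rw [hq₂]; linarith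
  set t₁ : ℝ := (q₂ - q₁) / (m₁ - m₂) with ht₁def
  set t₂ : ℝ := (q₃ - q₂) / m₂ with ht₂def
  have ht₁pos : 0 < t₁ := div_pos he₁ hd
  have ht₂pos : 0 < t₂ := div_pos he₂ hm2pos
  have ht₁d : t₁ * (m₁ - m₂) = q₂ - q₁ := div_mul_cancel₀ _ hd.ne'
  have ht₂d : t₂ * m₂ = q₃ - q₂ := div_mul_cancel₀ _ hm2pos.ne'
  have ht12 : t₁ ≤ t₂ := by
    rw [ht₁def, ht₂def, div_le_div_iff₀ hd hm2pos, hq₂]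
    exact aux_t12 m₁ m₂ q₁ q₃ hm1l hm2l hm2u hq1l hq1u hq3l
  have hAB : ∀ s : ℝ, s ≤ t₁ → m₁ * s + q₁ ≤ m₂ * s + q₂ := by
    intro s hs
    have h := mul_le_mul_of_nonneg_right hs hd.le
    rw [ht₁d] at h; linarith
  have hAB' : ∀ s : ℝ, s < t₁ → m₁ * s + q₁ < m₂ * s + q₂ := by
    intro s hs
    have h := mul_lt_mul_of_pos_right hs hd
    rw [ht₁d] at h; linarith
  have hBA : ∀ s : ℝ, t₁ ≤ s → m₂ * s + q₂ ≤ m₁ * s + q₁ := by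
    intro s hs
    have h := mul_le_mul_of_nonneg_right hs hd.le
    rw [ht₁d] at h; linarith
  have hBA' : ∀ s : ℝ, t₁ < s → m₂ * s + q₂ < m₁ * s + q₁ := by
    intro s hs
    have h := mul_lt_mul_of_pos_right hs hd
    rw [ht₁d] at h; linarith
  have hBC : ∀ s : ℝ, s ≤ t₂ → m₂ * s + q₂ ≤ q₃ := by
    intro s hs
    have h := mul_le_mul_of_nonneg_right hs hm2pos.le
    rw [ht₂d] at h; linarith
  have hBC' : ∀ s : ℝ, s < t₂ → m₂ * s + q₂ < q₃ := by
    intro s hs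
    have h := mul_lt_mul_of_pos_right hs hm2pos
    rw [ht₂d] at h; linarith
  have hCB : ∀ s : ℝ, t₂ ≤ s → q₃ ≤ m₂ * s + q₂ := by
    intro s hs
    have h := mul_le_mul_of_nonneg_right hs hm2pos.le
    rw [ht₂d] at h; linarith
  have hCB' : ∀ s : ℝ, t₂ < s → q₃ < m₂ * s + q₂ := by
    intro s hs
    have h := mul_lt_mul_of_pos_right hs hm2pos
    rw [ht₂d] at h; linarith
  have hx₁' : x₁ = t₁ ^ 2 := hx₁
  have hx₂' : x₂ = t₂ ^ 2 := hx₂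
  intro x hx
  set s : ℝ := Real.sqrt x with hsdef
  refine ⟨?_, ?_, ?_, ?_, ?_, ?_⟩
  · rintro ⟨-, hxu⟩
    have hs1 : s ≤ t₁ := by
      rw [hsdef, ← Real.sqrt_sq ht₁pos.le]
      exact Real.sqrt_le_sqrt (by rw [← hx₁']; exact hxu)
    have h1 := hAB s hs1
    have h2 := hBC s (hs1.trans ht12)
    rw [min_eq_left h1, min_eq_left (h1.trans h2)]
  · rintro ⟨hxl, hxu⟩
    have hs1 : t₁ ≤ s := by
      rw [hsdef, ← Real.sqrt_sq ht₁pos.le]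
      exact Real.sqrt_le_sqrt (by rw [← hx₁']; exact hxl)
    have hs2 : s ≤ t₂ := by
      rw [hsdef, ← Real.sqrt_sq ht₂pos.le]
      exact Real.sqrt_le_sqrt (by rw [← hx₂']; exact hxu)
    rw [min_eq_right (hBA s hs1), min_eq_left (hBC s hs2)]
  · rintro ⟨hxl, -⟩
    have hs2 : t₂ ≤ s := by
      rw [hsdef, ← Real.sqrt_sq ht₂pos.le]
      exact Real.sqrt_le_sqrt (by rw [← hx₂']; exact hxl)
    have h1 := hCB s hs2
    have h2 := hBA s (ht12.trans hs2)
    rw [min_eq_right (le_min (h1.trans h2) h1)]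
  · rintro ⟨hxl, hxu⟩
    have hs1 : s < t₁ := by
      rw [hsdef, ← Real.sqrt_sq ht₁pos.le]
      exact Real.sqrt_lt_sqrt hxl.le (by rw [← hx₁']; exact hxu)
    exact ⟨hAB' s hs1, (hAB' s hs1).trans_le (hBC s (hs1.le.trans ht12))⟩
  · rintro ⟨hxl, hxu⟩
    have hs1 : t₁ < s := by
      rw [hsdef, ← Real.sqrt_sq ht₁pos.le]
      exact Real.sqrt_lt_sqrt (sq_nonneg t₁) (by rw [← hx₁']; exact hxl)
    have hs2 : s < t₂ := by
      rw [hsdef, ← Real.sqrt_sq ht₂pos.le]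
      exact Real.sqrt_lt_sqrt hx.1 (by rw [← hx₂']; exact hxu)
    exact ⟨hBA' s hs1, hBC' s hs2⟩
  · rintro ⟨hxl, -⟩
    have hs2 : t₂ < s := by
      rw [hsdef, ← Real.sqrt_sq ht₂pos.le]
      exact Real.sqrt_lt_sqrt (sq_nonneg t₂) (by rw [← hx₂']; exact hxl)
    have h1 := hCB' s hs2
    exact ⟨h1.trans_le (hBA s (ht12.trans hs2.le)), h1⟩
end

section
/- Define m₁ = √2·√(π − √3), q₁ = 12^(1/4), m₂ = 2·√(π/3 + 1 − √3), q₂ = 2, q₃ = 2·3^(1/4), x₁ = ((q₂ − q₁)/(m₁ − m₂))², x₂ = ((q₃ − q₂)/m₂)², and define ℐ : [0,1] → ℝ by ℐ(x) = m₁√x + q₁ for x ∈ [0, x₁], ℐ(x) = m₂√x + q₂ for x ∈ [x₁, x₂], ℐ(x) = q₃ for x ∈ [x₂, 1/2], and ℐ(x) = ℐ(1 − x) for x ∈ [1/2, 1]. Then the function x ↦ (ℐ(x) − ℐ(0))² = (ℐ(x) − 12^(1/4))² is concave on the interval [0,1]. -/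
open Real Set

set_option maxHeartbeats 1000000

private lemma sq_lower {x c : ℝ} (hx : 0 ≤ x) (h : c ^ 2 < x ^ 2) (hc : 0 ≤ c) : c < x := by
  nlinarith

private lemma sq_upper {x c : ℝ} (hx : 0 ≤ x) (h : x ^ 2 < c ^ 2) (hc : 0 < c) : x < c := by
  nlinarith

private lemma L1 (m₁ m₂ A t : ℝ) (hm1 : 0 ≤ m₁) (hm2 : 0 ≤ m₂) (hA : 0 ≤ A) (ht : 0 ≤ t)
    (h : (m₁ - m₂) * t ≤ A) :
    m₁ ^ 2 * t ^ 2 ≤ m₂ ^ 2 * t ^ 2 + 2 * m₂ * A * t + A ^ 2 := by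
  nlinarith [mul_nonneg (sub_nonneg.mpr h)
    (add_nonneg hA (mul_nonneg (add_nonneg hm1 hm2) ht))]

private lemma L1' (m₁ m₂ A t : ℝ) (hm1 : 0 ≤ m₁) (hm2 : 0 ≤ m₂) (hA : 0 ≤ A) (ht : 0 ≤ t)
    (h : A ≤ (m₁ - m₂) * t) :
    m₂ ^ 2 * t ^ 2 + 2 * m₂ * A * t + A ^ 2 ≤ m₁ ^ 2 * t ^ 2 := by
  nlinarith [mul_nonneg (sub_nonneg.mpr h)
    (add_nonneg hA (mul_nonneg (add_nonneg hm1 hm2) ht))]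

private lemma L2 (m₂ A B t : ℝ) (hm2 : 0 ≤ m₂) (hA : 0 ≤ A) (hB : 0 ≤ B) (ht : 0 ≤ t)
    (h : m₂ * t ≤ B) :
    m₂ ^ 2 * t ^ 2 + 2 * m₂ * A * t + A ^ 2 ≤ (A + B) ^ 2 := by
  nlinarith [mul_nonneg (sub_nonneg.mpr h)
    (add_nonneg (add_nonneg hB (by linarith : (0:ℝ) ≤ 2 * A)) (mul_nonneg hm2 ht))]

private lemma L2' (m₂ A B t : ℝ) (hm2 : 0 ≤ m₂) (hA : 0 ≤ A) (hB : 0 ≤ B) (ht : 0 ≤ t)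
    (h : B ≤ m₂ * t) :
    (A + B) ^ 2 ≤ m₂ ^ 2 * t ^ 2 + 2 * m₂ * A * t + A ^ 2 := by
  nlinarith [mul_nonneg (sub_nonneg.mpr h)
    (add_nonneg (add_nonneg hB (by linarith : (0:ℝ) ≤ 2 * A)) (mul_nonneg hm2 ht))]

private lemma L3 (m₂ A t u : ℝ) (hm2 : 0 ≤ m₂) (hA : 0 ≤ A) (ht : 0 ≤ t) (htu : t ≤ u) :
    m₂ ^ 2 * t ^ 2 + 2 * m₂ * A * t + A ^ 2 ≤ m₂ ^ 2 * u ^ 2 + 2 * m₂ * A * u + A ^ 2 := by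
  nlinarith [mul_le_mul_of_nonneg_left htu
      (mul_nonneg (mul_nonneg (by norm_num : (0:ℝ) ≤ 2) hm2) hA),
    mul_le_mul_of_nonneg_left (mul_self_le_mul_self ht htu) (sq_nonneg m₂)]

private lemma L4 (m t u : ℝ) (ht : 0 ≤ t) (htu : t ≤ u) : m ^ 2 * t ^ 2 ≤ m ^ 2 * u ^ 2 := by
  nlinarith [mul_le_mul_of_nonneg_left (mul_self_le_mul_self ht htu) (sq_nonneg m)]

private lemma L5 (m c x y : ℝ) (h1 : c ≤ m ^ 2 * x) (h2 : x ≤ y) : c ≤ m ^ 2 * y := by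
  nlinarith [mul_le_mul_of_nonneg_left h2 (sq_nonneg m)]

private lemma linear_concave (c : ℝ) : ConcaveOn ℝ (Icc (0:ℝ) 1) (fun x => c * x) := by
  refine ⟨convex_Icc 0 1, fun x _ y _ a b ha hb hab => ?_⟩
  simp only [smul_eq_mul]
  have h : a * (c * x) + b * (c * y) = c * (a * x + b * y) := by ring
  linarith [h.le]

private lemma sqrt_concave_comb (c d e : ℝ) (hc : 0 ≤ c) :
    ConcaveOn ℝ (Icc (0:ℝ) 1) (fun x => d * x + c * Real.sqrt x + e) := by
  refine ⟨convex_Icc 0 1, fun x hx y hy a b ha hb hab => ?_⟩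
  simp only [smul_eq_mul]
  have hx0 := hx.1
  have hy0 := hy.1
  have hb' : b = 1 - a := by linarith
  have h1 : a * Real.sqrt x + b * Real.sqrt y ≤ Real.sqrt (a * x + b * y) := by
    have hs : 0 ≤ a * Real.sqrt x + b * Real.sqrt y := by positivity
    rw [← Real.sqrt_sq hs]
    apply Real.sqrt_le_sqrt
    have e1 : Real.sqrt x ^ 2 = x := Real.sq_sqrt hx0
    have e2 : Real.sqrt y ^ 2 = y := Real.sq_sqrt hy0
    subst hb'
    nlinarith [mul_nonneg (mul_nonneg ha (by linarith : (0:ℝ) ≤ 1 - a))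
      (sq_nonneg (Real.sqrt x - Real.sqrt y))]
  have key : a * (d * x + c * Real.sqrt x + e) + b * (d * y + c * Real.sqrt y + e) =
      d * (a * x + b * y) + c * (a * Real.sqrt x + b * Real.sqrt y) + e := by
    linear_combination e * hab
  rw [key]
  have h2 := mul_le_mul_of_nonneg_left h1 hc
  linarith

private lemma reflect_concave {f : ℝ → ℝ} (h : ConcaveOn ℝ (Icc (0:ℝ) 1) f) :
    ConcaveOn ℝ (Icc (0:ℝ) 1) (fun x => f (1 - x)) := by
  refine ⟨convex_Icc 0 1, fun x hx y hy a b ha hb hab => ?_⟩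
  have hx' : (1:ℝ) - x ∈ Icc (0:ℝ) 1 := ⟨by linarith [hx.2], by linarith [hx.1]⟩
  have hy' : (1:ℝ) - y ∈ Icc (0:ℝ) 1 := ⟨by linarith [hy.2], by linarith [hy.1]⟩
  have h2 := h.2 hx' hy' ha hb hab
  simp only [smul_eq_mul] at h2 ⊢
  have e : a * (1 - x) + b * (1 - y) = 1 - (a * x + b * y) := by linear_combination hab
  rw [e] at h2
  exact h2

private lemma min_concave {f g : ℝ → ℝ} {s : Set ℝ} (hf : ConcaveOn ℝ s f)
    (hg : ConcaveOn ℝ s g) : ConcaveOn ℝ s (fun x => min (f x) (g x)) := by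
  refine ⟨hf.1, fun x hx y hy a b ha hb hab => ?_⟩
  simp only [smul_eq_mul]
  refine le_min ?_ ?_
  · calc a * min (f x) (g x) + b * min (f y) (g y) ≤ a * f x + b * f y :=
        add_le_add (mul_le_mul_of_nonneg_left (min_le_left _ _) ha)
          (mul_le_mul_of_nonneg_left (min_le_left _ _) hb)
      _ ≤ f (a * x + b * y) := by simpa using hf.2 hx hy ha hb hab
  · calc a * min (f x) (g x) + b * min (f y) (g y) ≤ a * g x + b * g y :=
        add_le_add (mul_le_mul_of_nonneg_left (min_le_right _ _) ha)
          (mul_le_mul_of_nonneg_left (min_le_right _ _) hb)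
      _ ≤ g (a * x + b * y) := by simpa using hg.2 hx hy ha hb hab

private theorem key (m₁ m₂ A B x₁ x₂ : ℝ) (f : ℝ → ℝ)
    (hm₂ : 0 < m₂) (hm : m₂ < m₁) (hA : 0 < A) (hB : 0 < B)
    (hN2 : (A + B) * m₂ ≤ m₁ * B)
    (hN4 : 2 * B ^ 2 ≤ m₂ ^ 2)
    (hN5 : A * m₂ ≤ B * (m₁ - m₂))
    (hx₁ : x₁ = (A / (m₁ - m₂)) ^ 2)
    (hx₂ : x₂ = (B / m₂) ^ 2)
    (hf₁ : ∀ x ∈ Icc (0:ℝ) x₁, f x = (m₁ * Real.sqrt x) ^ 2)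
    (hf₂ : ∀ x ∈ Icc x₁ x₂, f x = (m₂ * Real.sqrt x + A) ^ 2)
    (hf₃ : ∀ x ∈ Icc x₂ (1/2 : ℝ), f x = (A + B) ^ 2)
    (hf₄ : ∀ x ∈ Icc (1/2 : ℝ) 1, f x = f (1 - x)) :
    ConcaveOn ℝ (Icc (0:ℝ) 1) f := by
  have hmm : 0 < m₁ - m₂ := by linarith
  have hm₁ : 0 < m₁ := by linarith
  have hx₁0 : 0 ≤ x₁ := by rw [hx₁]; positivity
  have hsx₁ : Real.sqrt x₁ = A / (m₁ - m₂) := by rw [hx₁]; exact Real.sqrt_sq (by positivity)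
  have hsx₂ : Real.sqrt x₂ = B / m₂ := by rw [hx₂]; exact Real.sqrt_sq (by positivity)
  have hx₂half : x₂ ≤ 1 / 2 := by
    rw [hx₂, div_pow, div_le_iff₀ (by positivity)]
    linarith
  have hbase : A / (m₁ - m₂) ≤ B / m₂ := by
    rw [div_le_div_iff₀ hmm hm₂]; linarith
  have hx₁₂ : x₁ ≤ x₂ := by
    rw [hx₁, hx₂]; exact pow_le_pow_left₀ (by positivity) hbase 2
  have hx₁half : x₁ ≤ 1 / 2 := hx₁₂.trans hx₂half
  have hCx₂ : (A + B) ^ 2 ≤ m₁ ^ 2 * x₂ := by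
    rw [hx₂, div_pow, ← mul_div_assoc, le_div_iff₀ (by positivity)]
    calc (A + B) ^ 2 * m₂ ^ 2 = ((A + B) * m₂) * ((A + B) * m₂) := by ring
      _ ≤ (m₁ * B) * (m₁ * B) := mul_self_le_mul_self (by positivity) hN2
      _ = m₁ ^ 2 * B ^ 2 := by ring
  have hgconc : ConcaveOn ℝ (Icc (0:ℝ) 1)
      (fun x => min (min (m₁ ^ 2 * x) (m₂ ^ 2 * x + 2 * m₂ * A * Real.sqrt x + A ^ 2))
        (min ((A + B) ^ 2)
          (min (m₂ ^ 2 * (1 - x) + 2 * m₂ * A * Real.sqrt (1 - x) + A ^ 2)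
            (m₁ ^ 2 * (1 - x))))) := by
    have hgB : ConcaveOn ℝ (Icc (0:ℝ) 1)
        (fun x => m₂ ^ 2 * x + 2 * m₂ * A * Real.sqrt x + A ^ 2) :=
      sqrt_concave_comb _ _ _ (by positivity)
    exact min_concave (min_concave (linear_concave _) hgB)
      (min_concave (concaveOn_const _ (convex_Icc 0 1))
        (min_concave (reflect_concave hgB) (reflect_concave (linear_concave _))))
  have hfg : ∀ z ∈ Icc (0:ℝ) 1, f z =
      min (min (m₁ ^ 2 * z) (m₂ ^ 2 * z + 2 * m₂ * A * Real.sqrt z + A ^ 2))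
        (min ((A + B) ^ 2)
          (min (m₂ ^ 2 * (1 - z) + 2 * m₂ * A * Real.sqrt (1 - z) + A ^ 2)
            (m₁ ^ 2 * (1 - z)))) := by
    intro z hz
    obtain ⟨hz0, hz1⟩ := hz
    set t := Real.sqrt z with htdef
    set u := Real.sqrt (1 - z) with hudef
    clear_value t u
    have ht0 : 0 ≤ t := by rw [htdef]; exact Real.sqrt_nonneg z
    have hu0 : 0 ≤ u := by rw [hudef]; exact Real.sqrt_nonneg _
    have hz2 : z = t ^ 2 := by rw [htdef]; exact (Real.sq_sqrt hz0).symm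
    have hz3 : 1 - z = u ^ 2 := by rw [hudef]; exact (Real.sq_sqrt (by linarith)).symm
    have h13 : (1:ℝ) - t ^ 2 = u ^ 2 := by rw [← hz2]; exact hz3
    rcases le_total z x₁ with hc1 | hc1
    · -- piece 1 : f = m₁² z
      have ht1 : t ≤ A / (m₁ - m₂) := by rw [htdef, ← hsx₁]; exact Real.sqrt_le_sqrt hc1
      have hta : (m₁ - m₂) * t ≤ A := by
        have := (le_div_iff₀ hmm).mp ht1; linarith
      have htb : m₂ * t ≤ B := by
        have := (le_div_iff₀ hm₂).mp (ht1.trans hbase); linarith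
      have htu : t ≤ u := by rw [htdef, hudef]; exact Real.sqrt_le_sqrt (by linarith)
      have hAB := L1 m₁ m₂ A t hm₁.le hm₂.le hA.le ht0 hta
      have hBC := L2 m₂ A B t hm₂.le hA.le hB.le ht0 htb
      have hBD := L3 m₂ A t u hm₂.le hA.le ht0 htu
      have hAE := L4 m₁ t u ht0 htu
      rw [hf₁ z ⟨hz0, hc1⟩, hz2, h13]
      rw [min_eq_left hAB, min_eq_left (le_min (hAB.trans hBC)
        (le_min (hAB.trans hBD) hAE))]
      rw [Real.sqrt_sq ht0]
      ring
    rcases le_total z x₂ with hc2 | hc2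
    · -- piece 2 : f = (m₂ √z + A)²
      have ht1 : A / (m₁ - m₂) ≤ t := by rw [htdef, ← hsx₁]; exact Real.sqrt_le_sqrt hc1
      have hta : A ≤ (m₁ - m₂) * t := by
        have := (div_le_iff₀ hmm).mp ht1; linarith
      have ht2 : t ≤ B / m₂ := by rw [htdef, ← hsx₂]; exact Real.sqrt_le_sqrt hc2
      have htb : m₂ * t ≤ B := by
        have := (le_div_iff₀ hm₂).mp ht2; linarith
      have htu : t ≤ u := by rw [htdef, hudef]; exact Real.sqrt_le_sqrt (by linarith)
      have hBA := L1' m₁ m₂ A t hm₁.le hm₂.le hA.le ht0 hta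
      have hBC := L2 m₂ A B t hm₂.le hA.le hB.le ht0 htb
      have hBD := L3 m₂ A t u hm₂.le hA.le ht0 htu
      have hCE : (A + B) ^ 2 ≤ m₁ ^ 2 * u ^ 2 :=
        L5 m₁ _ x₂ (u ^ 2) hCx₂ (by rw [← hz3]; linarith)
      have hBE : m₂ ^ 2 * t ^ 2 + 2 * m₂ * A * t + A ^ 2 ≤ m₁ ^ 2 * u ^ 2 :=
        hBC.trans hCE
      rw [hf₂ z ⟨hc1, hc2⟩, hz2, h13]
      rw [min_eq_right hBA, min_eq_left (le_min hBC (le_min hBD hBE))]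
      rw [Real.sqrt_sq ht0]
      ring
    · -- pieces 3-6 : x₂ ≤ z
      have hCA : (A + B) ^ 2 ≤ m₁ ^ 2 * t ^ 2 :=
        L5 m₁ _ x₂ (t ^ 2) hCx₂ (by rw [← hz2]; linarith)
      have ht2 : B / m₂ ≤ t := by rw [htdef, ← hsx₂]; exact Real.sqrt_le_sqrt hc2
      have htb : B ≤ m₂ * t := by
        have := (div_le_iff₀ hm₂).mp ht2; linarith
      have hCB := L2' m₂ A B t hm₂.le hA.le hB.le ht0 htb
      rcases le_total z (1/2 : ℝ) with hc3 | hc3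
      · -- piece 3 : f = (A+B)²
        have hu2 : B / m₂ ≤ u := by
          rw [hudef, ← hsx₂]; exact Real.sqrt_le_sqrt (by linarith)
        have hub : B ≤ m₂ * u := by
          have := (div_le_iff₀ hm₂).mp hu2; linarith
        have hCD := L2' m₂ A B u hm₂.le hA.le hB.le hu0 hub
        have hCE : (A + B) ^ 2 ≤ m₁ ^ 2 * u ^ 2 :=
          L5 m₁ _ x₂ (u ^ 2) hCx₂ (by rw [← hz3]; linarith)
        rw [hf₃ z ⟨hc2, hc3⟩, hz2, h13]
        rw [min_eq_left (le_min hCD hCE), min_eq_right (le_min hCA hCB)]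
      · -- z ≥ 1/2
        have hzmem : z ∈ Icc (1/2 : ℝ) 1 := ⟨hc3, hz1⟩
        have hut : u ≤ t := by rw [htdef, hudef]; exact Real.sqrt_le_sqrt (by linarith)
        rcases le_total z (1 - x₂) with hc4 | hc4
        · -- piece 4 : f = f(1-z) = (A+B)²
          have hu2 : B / m₂ ≤ u := by
            rw [hudef, ← hsx₂]; exact Real.sqrt_le_sqrt (by linarith)
          have hub : B ≤ m₂ * u := by
            have := (div_le_iff₀ hm₂).mp hu2; linarith
          have hCD := L2' m₂ A B u hm₂.le hA.le hB.le hu0 hub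
          have hCE : (A + B) ^ 2 ≤ m₁ ^ 2 * u ^ 2 :=
            L5 m₁ _ x₂ (u ^ 2) hCx₂ (by rw [← hz3]; linarith)
          rw [hf₄ z hzmem, hf₃ (1 - z) ⟨by linarith, by linarith⟩, hz2, h13]
          rw [min_eq_left (le_min hCD hCE), min_eq_right (le_min hCA hCB)]
        rcases le_total z (1 - x₁) with hc5 | hc5
        · -- piece 5 : f = f(1-z) = (m₂ √(1-z) + A)²
          have hu1 : A / (m₁ - m₂) ≤ u := by
            rw [hudef, ← hsx₁]; exact Real.sqrt_le_sqrt (by linarith)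
          have hua : A ≤ (m₁ - m₂) * u := by
            have := (div_le_iff₀ hmm).mp hu1; linarith
          have hu2 : u ≤ B / m₂ := by
            rw [hudef, ← hsx₂]; exact Real.sqrt_le_sqrt (by linarith)
          have hub : m₂ * u ≤ B := by
            have := (le_div_iff₀ hm₂).mp hu2; linarith
          have hDC := L2 m₂ A B u hm₂.le hA.le hB.le hu0 hub
          have hDE := L1' m₁ m₂ A u hm₁.le hm₂.le hA.le hu0 hua
          have hDB := L3 m₂ A u t hm₂.le hA.le hu0 hut
          have hDA : m₂ ^ 2 * u ^ 2 + 2 * m₂ * A * u + A ^ 2 ≤ m₁ ^ 2 * t ^ 2 :=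
            hDC.trans hCA
          rw [hf₄ z hzmem, hf₂ (1 - z) ⟨by linarith, by linarith⟩, hz2, h13]
          rw [min_eq_left hDE, min_eq_right hDC, min_eq_right (le_min hDA hDB)]
          rw [Real.sqrt_sq hu0]
          ring
        · -- piece 6 : f = f(1-z) = (m₁ √(1-z))²
          have hu1 : u ≤ A / (m₁ - m₂) := by
            rw [hudef, ← hsx₁]; exact Real.sqrt_le_sqrt (by linarith)
          have hua : (m₁ - m₂) * u ≤ A := by
            have := (le_div_iff₀ hmm).mp hu1; linarith
          have hub : m₂ * u ≤ B := by
            have := (le_div_iff₀ hm₂).mp (hu1.trans hbase); linarith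
          have hED := L1 m₁ m₂ A u hm₁.le hm₂.le hA.le hu0 hua
          have hDC := L2 m₂ A B u hm₂.le hA.le hB.le hu0 hub
          have hDB := L3 m₂ A u t hm₂.le hA.le hu0 hut
          have hEA := L4 m₁ u t hu0 hut
          have hEC : m₁ ^ 2 * u ^ 2 ≤ (A + B) ^ 2 := hED.trans hDC
          have hEB : m₁ ^ 2 * u ^ 2 ≤ m₂ ^ 2 * t ^ 2 + 2 * m₂ * A * t + A ^ 2 :=
            hED.trans hDB
          rw [hf₄ z hzmem, hf₁ (1 - z) ⟨by linarith, by linarith⟩, hz2, h13]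
          rw [min_eq_right hED, min_eq_right hEC, min_eq_right (le_min hEA hEB)]
          rw [Real.sqrt_sq hu0]
          ring
  refine ⟨convex_Icc 0 1, fun x hx y hy a b ha hb hab => ?_⟩
  rw [hfg x hx, hfg y hy, hfg _ ((convex_Icc (0:ℝ) 1) hx hy ha hb hab)]
  simpa using hgconc.2 hx hy ha hb hab

/-- If `ℐ : ℝ → ℝ` is the isoperimetric profile, given by `ℐ(x) = m₁√x + q₁` on
`[0, x₁]`, `ℐ(x) = m₂√x + q₂` on `[x₁, x₂]`, `ℐ(x) = q₃` on `[x₂, 1/2]` and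
`ℐ(x) = ℐ(1 − x)` on `[1/2, 1]`, then `x ↦ (ℐ(x) − ℐ(0))² = (ℐ(x) − 12^(1/4))²`
is concave on `[0, 1]`. -/
theorem stmt_11 (m₁ q₁ m₂ q₂ q₃ x₁ x₂ : ℝ)
    (hm₁ : m₁ = Real.sqrt 2 * Real.sqrt (π - Real.sqrt 3))
    (hq₁ : q₁ = (12 : ℝ) ^ ((1 : ℝ) / 4))
    (hm₂ : m₂ = 2 * Real.sqrt (π / 3 + 1 - Real.sqrt 3))
    (hq₂ : q₂ = 2)
    (hq₃ : q₃ = 2 * (3 : ℝ) ^ ((1 : ℝ) / 4))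
    (hx₁ : x₁ = ((q₂ - q₁) / (m₁ - m₂)) ^ 2)
    (hx₂ : x₂ = ((q₃ - q₂) / m₂) ^ 2)
    (I : ℝ → ℝ)
    (hI₁ : ∀ x ∈ Set.Icc (0 : ℝ) x₁, I x = m₁ * Real.sqrt x + q₁)
    (hI₂ : ∀ x ∈ Set.Icc x₁ x₂, I x = m₂ * Real.sqrt x + q₂)
    (hI₃ : ∀ x ∈ Set.Icc x₂ (1 / 2 : ℝ), I x = q₃)
    (hI₄ : ∀ x ∈ Set.Icc (1 / 2 : ℝ) 1, I x = I (1 - x)) :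
    ConcaveOn ℝ (Set.Icc (0 : ℝ) 1)
      (fun x => (I x - (12 : ℝ) ^ ((1 : ℝ) / 4)) ^ 2) := by
  -- numeric bounds
  have hs3sq : Real.sqrt 3 ^ 2 = 3 := Real.sq_sqrt (by norm_num)
  have hs30 : (0:ℝ) ≤ Real.sqrt 3 := Real.sqrt_nonneg 3
  have hs3l : (1.732 : ℝ) < Real.sqrt 3 := by
    refine sq_lower hs30 ?_ (by norm_num)
    rw [hs3sq]; norm_num
  have hs3u : Real.sqrt 3 < 1.7321 := by
    refine sq_upper hs30 ?_ (by norm_num)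
    rw [hs3sq]; norm_num
  have hpl := Real.pi_gt_d6
  have hpu := Real.pi_lt_d6
  -- r = 3^(1/4)
  have hr0 : (0:ℝ) ≤ (3:ℝ) ^ ((1:ℝ)/4) := Real.rpow_nonneg (by norm_num) _
  have hr2 : ((3:ℝ) ^ ((1:ℝ)/4)) ^ 2 = Real.sqrt 3 := by
    rw [← Real.rpow_natCast ((3:ℝ) ^ ((1:ℝ)/4)) 2, ← Real.rpow_mul (by norm_num : (0:ℝ) ≤ 3)]
    rw [Real.sqrt_eq_rpow]
    norm_num
  have hrl : (1.316 : ℝ) < (3:ℝ) ^ ((1:ℝ)/4) := by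
    refine sq_lower hr0 ?_ (by norm_num)
    rw [hr2]
    have h : (1.316:ℝ) ^ 2 = 1.731856 := by norm_num
    linarith
  have hru : (3:ℝ) ^ ((1:ℝ)/4) < 1.3161 := by
    refine sq_upper hr0 ?_ (by norm_num)
    rw [hr2]
    have h : (1.3161:ℝ) ^ 2 = 1.73211921 := by norm_num
    linarith
  -- q₁ = 12^(1/4)
  have hq0 : (0:ℝ) ≤ (12:ℝ) ^ ((1:ℝ)/4) := Real.rpow_nonneg (by norm_num) _
  have hs12sq : Real.sqrt 12 ^ 2 = 12 := Real.sq_sqrt (by norm_num)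
  have hs120 : (0:ℝ) ≤ Real.sqrt 12 := Real.sqrt_nonneg 12
  have hs12l : (3.4641 : ℝ) < Real.sqrt 12 := by
    refine sq_lower hs120 ?_ (by norm_num)
    rw [hs12sq]; norm_num
  have hs12u : Real.sqrt 12 < 3.4642 := by
    refine sq_upper hs120 ?_ (by norm_num)
    rw [hs12sq]; norm_num
  have hq2' : ((12:ℝ) ^ ((1:ℝ)/4)) ^ 2 = Real.sqrt 12 := by
    rw [← Real.rpow_natCast ((12:ℝ) ^ ((1:ℝ)/4)) 2, ← Real.rpow_mul (by norm_num : (0:ℝ) ≤ 12)]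
    rw [Real.sqrt_eq_rpow]
    norm_num
  have hql : (1.861 : ℝ) < (12:ℝ) ^ ((1:ℝ)/4) := by
    refine sq_lower hq0 ?_ (by norm_num)
    rw [hq2']
    have h : (1.861:ℝ) ^ 2 = 3.463321 := by norm_num
    linarith
  have hqu : (12:ℝ) ^ ((1:ℝ)/4) < 1.8613 := by
    refine sq_upper hq0 ?_ (by norm_num)
    rw [hq2']
    have h : (1.8613:ℝ) ^ 2 = 3.46443769 := by norm_num
    linarith
  -- m₁ bounds
  have hpis3 : (0:ℝ) ≤ π - Real.sqrt 3 := by linarith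
  have hm₁0 : 0 ≤ m₁ := by rw [hm₁]; positivity
  have hm₁sq : m₁ ^ 2 = 2 * (π - Real.sqrt 3) := by
    rw [hm₁, mul_pow, Real.sq_sqrt (by norm_num : (0:ℝ) ≤ 2), Real.sq_sqrt hpis3]
  have hm₁l : (1.6789 : ℝ) < m₁ := by
    refine sq_lower hm₁0 ?_ (by norm_num)
    rw [hm₁sq]
    have h : (1.6789:ℝ) ^ 2 = 2.81870521 := by norm_num
    linarith
  have hm₁u : m₁ < 1.6791 := by
    refine sq_upper hm₁0 ?_ (by norm_num)
    rw [hm₁sq]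
    have h : (1.6791:ℝ) ^ 2 = 2.81937681 := by norm_num
    linarith
  -- m₂ bounds
  have hpi3s3 : (0:ℝ) ≤ π / 3 + 1 - Real.sqrt 3 := by linarith
  have hm₂0 : 0 ≤ m₂ := by rw [hm₂]; positivity
  have hm₂sq : m₂ ^ 2 = 4 * (π / 3 + 1 - Real.sqrt 3) := by
    rw [hm₂, mul_pow, Real.sq_sqrt hpi3s3]; ring
  have hm₂l : (1.1226 : ℝ) < m₂ := by
    refine sq_lower hm₂0 ?_ (by norm_num)
    rw [hm₂sq]
    have h : (1.1226:ℝ) ^ 2 = 1.26023076 := by norm_num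
    linarith
  have hm₂u : m₂ < 1.1229 := by
    refine sq_upper hm₂0 ?_ (by norm_num)
    rw [hm₂sq]
    have h : (1.1229:ℝ) ^ 2 = 1.26090441 := by norm_num
    linarith
  -- A = q₂ - q₁, B = q₃ - q₂
  have hA : 0 < q₂ - q₁ := by rw [hq₁, hq₂]; linarith
  have hB : 0 < q₃ - q₂ := by rw [hq₂, hq₃]; linarith
  have hAu : q₂ - q₁ < 0.139 := by rw [hq₁, hq₂]; linarith
  have hBl : (0.632 : ℝ) < q₃ - q₂ := by rw [hq₂, hq₃]; linarith
  have hBu : q₃ - q₂ < 0.6322 := by rw [hq₂, hq₃]; linarith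
  have hN2 : ((q₂ - q₁) + (q₃ - q₂)) * m₂ ≤ m₁ * (q₃ - q₂) := by
    have h1 : ((q₂ - q₁) + (q₃ - q₂)) * m₂ ≤ 0.7712 * 1.1229 :=
      mul_le_mul (by linarith) (by linarith) (by linarith) (by norm_num)
    have h2 : (1.6789 : ℝ) * 0.632 ≤ m₁ * (q₃ - q₂) :=
      mul_le_mul (by linarith) (by linarith) (by norm_num) (by linarith)
    have h3 : (0.7712 : ℝ) * 1.1229 ≤ 1.6789 * 0.632 := by norm_num
    linarith
  have hN4 : 2 * (q₃ - q₂) ^ 2 ≤ m₂ ^ 2 := by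
    have h1 : (q₃ - q₂) ^ 2 ≤ 0.6322 * 0.6322 := by
      rw [sq]; exact mul_le_mul (by linarith) (by linarith) (by linarith) (by norm_num)
    have h2 : (1.2603 : ℝ) ≤ m₂ ^ 2 := by rw [hm₂sq]; linarith
    have h3 : (0.6322 : ℝ) * 0.6322 ≤ 0.3997 := by norm_num
    linarith
  have hN5 : (q₂ - q₁) * m₂ ≤ (q₃ - q₂) * (m₁ - m₂) := by
    have h1 : (q₂ - q₁) * m₂ ≤ 0.139 * 1.1229 :=
      mul_le_mul (by linarith) (by linarith) (by linarith) (by norm_num)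
    have h2 : (0.632 : ℝ) * 0.556 ≤ (q₃ - q₂) * (m₁ - m₂) :=
      mul_le_mul (by linarith) (by linarith) (by norm_num) (by linarith)
    have h3 : (0.139 : ℝ) * 1.1229 ≤ 0.632 * 0.556 := by norm_num
    linarith
  refine key m₁ m₂ (q₂ - q₁) (q₃ - q₂) x₁ x₂ _ (by linarith) (by linarith) hA hB hN2 hN4 hN5
    hx₁ hx₂ ?_ ?_ ?_ ?_
  · intro x hx
    rw [hI₁ x hx, ← hq₁]
    ring
  · intro x hx
    rw [hI₂ x hx, ← hq₁]
    ring
  · intro x hx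
    rw [hI₃ x hx, ← hq₁]
    ring
  · intro x hx
    rw [hI₄ x hx]
end

section
/- Define m₁ = √2·√(π − √3), q₁ = 12^(1/4), m₂ = 2·√(π/3 + 1 − √3), q₂ = 2, q₃ = 2·3^(1/4), and for x ∈ (0, 1/2) set ℐ(x) = min{ m₁√x + q₁, m₂√x + q₂, q₃ } and 𝒥(x) = 12^(1/4)·(√x + √(1 − x)). Then there exist points x, y ∈ (0, 1/2) such that ℐ(x) < 𝒥(x) and ℐ(y) > 𝒥(y). (Thus the periodic isoperimetric 2-tiling has strictly smaller perimeter than the asymptotic cost of juxtaposing two honeycombs of hexagons of areas x and 1 − x for some area fractions, and strictly larger perimeter for others; in particular, for some area fractions the periodic isoperimetric tiling is not a volume-constrained local minimizer of the perimeter in the plane.) -/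
open Real

/-- Comparison of the periodic isoperimetric profile
`ℐ(x) = min{m₁√x + q₁, m₂√x + q₂, q₃}` with the asymptotic honeycomb cost
`𝒥(x) = 12^(1/4)(√x + √(1 − x))`: there are points `x, y ∈ (0, 1/2)` with
`ℐ(x) < 𝒥(x)` and `ℐ(y) > 𝒥(y)`. -/
theorem stmt_12 (m₁ q₁ m₂ q₂ q₃ : ℝ)
    (hm₁ : m₁ = Real.sqrt 2 * Real.sqrt (π - Real.sqrt 3))
    (hq₁ : q₁ = (12 : ℝ) ^ ((1 : ℝ) / 4))
    (hm₂ : m₂ = 2 * Real.sqrt (π / 3 + 1 - Real.sqrt 3))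
    (hq₂ : q₂ = 2)
    (hq₃ : q₃ = 2 * (3 : ℝ) ^ ((1 : ℝ) / 4))
    (I J : ℝ → ℝ)
    (hI : ∀ x, I x = min (min (m₁ * Real.sqrt x + q₁) (m₂ * Real.sqrt x + q₂)) q₃)
    (hJ : ∀ x, J x = (12 : ℝ) ^ ((1 : ℝ) / 4) * (Real.sqrt x + Real.sqrt (1 - x))) :
    (∃ x ∈ Set.Ioo (0 : ℝ) (1 / 2), I x < J x) ∧
    (∃ y ∈ Set.Ioo (0 : ℝ) (1 / 2), J y < I y) := by
  -- numeric bounds on the basic constants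
  have pi_lt : π < 3.141593 := Real.pi_lt_d6
  have pi_gt : (3.141592 : ℝ) < π := Real.pi_gt_d6
  have s3u : Real.sqrt 3 < 1.7320509 := (Real.sqrt_lt' (by norm_num)).2 (by norm_num)
  have s3l : (1.73205 : ℝ) < Real.sqrt 3 := (Real.lt_sqrt (by norm_num)).2 (by norm_num)
  have s2u : Real.sqrt 2 < 1.41422 := (Real.sqrt_lt' (by norm_num)).2 (by norm_num)
  have s2l : (1.41421 : ℝ) < Real.sqrt 2 := (Real.lt_sqrt (by norm_num)).2 (by norm_num)
  -- q₁ = 12^(1/4) = √√12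
  have hq1' : q₁ = Real.sqrt (Real.sqrt 12) := by
    rw [hq₁, Real.sqrt_eq_rpow, Real.sqrt_eq_rpow, ← Real.rpow_mul (by norm_num : (0:ℝ) ≤ 12)]
    norm_num
  have s12u : Real.sqrt 12 < 3.46411 := (Real.sqrt_lt' (by norm_num)).2 (by norm_num)
  have s12l : (3.4641 : ℝ) < Real.sqrt 12 := (Real.lt_sqrt (by norm_num)).2 (by norm_num)
  have q1u : q₁ < 1.8613 := by
    rw [hq1']; exact (Real.sqrt_lt' (by norm_num)).2 (by nlinarith)
  have q1l : (1.8611 : ℝ) < q₁ := by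
    rw [hq1']; exact (Real.lt_sqrt (by norm_num)).2 (by nlinarith)
  -- q₃ = 2·3^(1/4) = 2√√3
  have hq3' : q₃ = 2 * Real.sqrt (Real.sqrt 3) := by
    rw [hq₃, Real.sqrt_eq_rpow, Real.sqrt_eq_rpow, ← Real.rpow_mul (by norm_num : (0:ℝ) ≤ 3)]
    norm_num
  have q3l : (2.63214 : ℝ) < q₃ := by
    rw [hq3']
    have : (1.31607 : ℝ) < Real.sqrt (Real.sqrt 3) :=
      (Real.lt_sqrt (by norm_num)).2 (by nlinarith)
    linarith
  -- m₁ bounds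
  have sPu : Real.sqrt (π - Real.sqrt 3) < 1.18725 :=
    (Real.sqrt_lt' (by norm_num)).2 (by nlinarith)
  have sPl : (1.1872 : ℝ) < Real.sqrt (π - Real.sqrt 3) :=
    (Real.lt_sqrt (by norm_num)).2 (by nlinarith)
  have m1u : m₁ < 1.68 := by
    rw [hm₁]
    calc Real.sqrt 2 * Real.sqrt (π - Real.sqrt 3) < 1.41422 * 1.18725 :=
          mul_lt_mul'' s2u sPu (Real.sqrt_nonneg _) (Real.sqrt_nonneg _)
      _ < 1.68 := by norm_num
  have m1l : (1.67 : ℝ) < m₁ := by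
    rw [hm₁]
    calc (1.67 : ℝ) < 1.41421 * 1.1872 := by norm_num
      _ < Real.sqrt 2 * Real.sqrt (π - Real.sqrt 3) :=
          mul_lt_mul'' s2l sPl (by norm_num) (by norm_num)
  -- m₂ lower bound
  have m2l : (1.1226 : ℝ) < m₂ := by
    rw [hm₂]
    have : (0.5613 : ℝ) < Real.sqrt (π / 3 + 1 - Real.sqrt 3) :=
      (Real.lt_sqrt (by norm_num)).2 (by nlinarith)
    linarith
  refine ⟨⟨1/100, by norm_num, ?_⟩, ⟨9/20, by norm_num, ?_⟩⟩
  · -- I(1/100) < J(1/100)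
    rw [hI, hJ, ← hq₁]
    have hx : Real.sqrt (1/100 : ℝ) = 1/10 := by
      rw [show (1/100 : ℝ) = (1/10)^2 by norm_num, Real.sqrt_sq (by norm_num)]
    have ht : (0.99498 : ℝ) < Real.sqrt (1 - 1/100) :=
      (Real.lt_sqrt (by norm_num)).2 (by norm_num)
    have hqt : (1.8517 : ℝ) < q₁ * Real.sqrt (1 - 1/100) := by
      calc (1.8517 : ℝ) < 1.8611 * 0.99498 := by norm_num
        _ < q₁ * Real.sqrt (1 - 1/100) := mul_lt_mul'' q1l ht (by norm_num) (by norm_num)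
    calc min (min (m₁ * Real.sqrt (1/100) + q₁) (m₂ * Real.sqrt (1/100) + q₂)) q₃
        ≤ m₁ * Real.sqrt (1/100) + q₁ := le_trans (min_le_left _ _) (min_le_left _ _)
      _ < q₁ * (Real.sqrt (1/100) + Real.sqrt (1 - 1/100)) := by
          rw [hx, mul_add]; linarith
  · -- J(9/20) < I(9/20)
    rw [hI, hJ, ← hq₁, hq₂]
    have uu : Real.sqrt (9/20 : ℝ) < 0.67083 := (Real.sqrt_lt' (by norm_num)).2 (by norm_num)
    have ul : (0.6708 : ℝ) < Real.sqrt (9/20) := (Real.lt_sqrt (by norm_num)).2 (by norm_num)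
    have vu : Real.sqrt (1 - 9/20 : ℝ) < 0.74163 :=
      (Real.sqrt_lt' (by norm_num)).2 (by norm_num)
    have hJu : q₁ * (Real.sqrt (9/20) + Real.sqrt (1 - 9/20)) < 2.6291 := by
      calc q₁ * (Real.sqrt (9/20) + Real.sqrt (1 - 9/20)) < 1.8613 * 1.41246 :=
            mul_lt_mul'' q1u (by linarith) (by linarith) (by positivity)
        _ < 2.6291 := by norm_num
    have hm1u : (1.12 : ℝ) < m₁ * Real.sqrt (9/20) := by
      calc (1.12 : ℝ) < 1.67 * 0.6708 := by norm_num
        _ < m₁ * Real.sqrt (9/20) := mul_lt_mul'' m1l ul (by norm_num) (by norm_num)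
    have hm2u : (0.753 : ℝ) < m₂ * Real.sqrt (9/20) := by
      calc (0.753 : ℝ) < 1.1226 * 0.6708 := by norm_num
        _ < m₂ * Real.sqrt (9/20) := mul_lt_mul'' m2l ul (by norm_num) (by norm_num)
    exact lt_min (lt_min (by linarith) (by linarith)) (by linarith)
end

section
/- Let a, b, u, v, d, w be real numbers with a, b, u, v > 0, d > 0, w > 0, and suppose a² + √3·ab + b² = (2 + √3)·d² and u·v = w². Then √((u − a)² + (v − b)²) ≥ √2·(w − d). (The minimal signed distance between the ellipse {(x,y) : x² + √3 xy + y² = (2+√3)d², x,y > 0} and the hyperbola {(x,y) : xy = w², x,y > 0} is attained at the diagonal points (d,d) and (w,w).) -/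
open Real

/-- Distance estimate between the ellipse `x² + √3xy + y² = (2+√3)d²` and the
hyperbola `xy = w²` (in the open first quadrant): if `(a,b)` lies on the ellipse
and `(u,v)` on the hyperbola, then `√((u − a)² + (v − b)²) ≥ √2·(w − d)`. -/
theorem stmt_13 (a b u v d w : ℝ)
    (ha : 0 < a) (hb : 0 < b) (hu : 0 < u) (hv : 0 < v) (hd : 0 < d) (hw : 0 < w)
    (hellipse : a ^ 2 + Real.sqrt 3 * a * b + b ^ 2 = (2 + Real.sqrt 3) * d ^ 2)
    (hhyperbola : u * v = w ^ 2) :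
    Real.sqrt 2 * (w - d) ≤ Real.sqrt ((u - a) ^ 2 + (v - b) ^ 2) := by
  have h3 : (0:ℝ) ≤ Real.sqrt 3 := Real.sqrt_nonneg 3
  have h3sq : Real.sqrt 3 ^ 2 = 3 := Real.sq_sqrt (by norm_num)
  have h32 : Real.sqrt 3 ≤ 2 := by nlinarith
  -- a + b ≤ 2d
  have hsq : (a + b) ^ 2 ≤ (2 * d) ^ 2 := by
    have key : (2 + Real.sqrt 3) * (a + b) ^ 2 ≤ (2 + Real.sqrt 3) * (2 * d) ^ 2 := by
      nlinarith [mul_nonneg (by linarith : (0:ℝ) ≤ 2 - Real.sqrt 3) (sq_nonneg (a - b))]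
    have hpos : (0:ℝ) < 2 + Real.sqrt 3 := by linarith
    exact le_of_mul_le_mul_left key hpos
  have hab : a + b ≤ 2 * d := by nlinarith
  -- 2w ≤ u + v
  have huv : 2 * w ≤ u + v := by nlinarith [sq_nonneg (u - v)]
  have hx : 2 * (w - d) ≤ (u - a) + (v - b) := by linarith
  rcases le_or_gt w d with hwd | hwd
  · have : Real.sqrt 2 * (w - d) ≤ 0 :=
      mul_nonpos_of_nonneg_of_nonpos (Real.sqrt_nonneg 2) (by linarith)
    exact this.trans (Real.sqrt_nonneg _)
  · have hlhs : 0 ≤ Real.sqrt 2 * (w - d) :=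
      mul_nonneg (Real.sqrt_nonneg 2) (by linarith)
    apply (Real.le_sqrt hlhs (by positivity)).mpr
    have h2sq : Real.sqrt 2 ^ 2 = 2 := Real.sq_sqrt (by norm_num)
    rw [mul_pow, h2sq]
    nlinarith [sq_nonneg ((u - a) - (v - b)),
      mul_nonneg (by linarith : (0:ℝ) ≤ (u - a) + (v - b) - 2 * (w - d))
        (by linarith : (0:ℝ) ≤ (u - a) + (v - b) + 2 * (w - d))]
end

section
/- Let K₁, K₂ > 0 and let ℓ, ℓ' > 0 with ℓ ≠ ℓ'. Set ℓ̄ = (ℓ + ℓ')/2. Then there exists λ ∈ (0, 1) such that 2·K₁·(λℓ̄) + K₂·(λℓ̄)² = K₁·(ℓ + ℓ') + K₂·ℓℓ', and consequently 2·(λℓ̄) + 2·(λℓ̄) < 2(ℓ + ℓ'). -/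
/-- Equalizing the flat edges of a `(4;8)` configuration: if `K₁, K₂ > 0` and
`ℓ ≠ ℓ'` are positive, with `ℓ̄ = (ℓ + ℓ')/2`, then there is `λ ∈ (0, 1)` with
`2K₁(λℓ̄) + K₂(λℓ̄)² = K₁(ℓ + ℓ') + K₂ℓℓ'` (area is preserved), and consequently
`2(λℓ̄) + 2(λℓ̄) < 2(ℓ + ℓ')` (the perimeter strictly decreases). -/
theorem stmt_14 (K₁ K₂ ℓ ℓ' ℓbar : ℝ)
    (hK₁ : 0 < K₁) (hK₂ : 0 < K₂) (hℓ : 0 < ℓ) (hℓ' : 0 < ℓ') (hne : ℓ ≠ ℓ')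
    (hbar : ℓbar = (ℓ + ℓ') / 2) :
    ∃ lam ∈ Set.Ioo (0 : ℝ) 1,
      2 * K₁ * (lam * ℓbar) + K₂ * (lam * ℓbar) ^ 2
        = K₁ * (ℓ + ℓ') + K₂ * (ℓ * ℓ') ∧
      2 * (lam * ℓbar) + 2 * (lam * ℓbar) < 2 * (ℓ + ℓ') := by
  subst hbar
  have hbarpos : 0 < (ℓ + ℓ') / 2 := by linarith
  set g : ℝ → ℝ := fun lam => 2 * K₁ * (lam * ((ℓ + ℓ') / 2)) + K₂ * (lam * ((ℓ + ℓ') / 2)) ^ 2 with hg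
  have hcont : ContinuousOn g (Set.Icc 0 1) := by fun_prop
  have h0 : g 0 = 0 := by simp [hg]
  have hd : 0 < (ℓ - ℓ') ^ 2 :=
    (sq_nonneg _).lt_of_ne (Ne.symm (pow_ne_zero 2 (sub_ne_zero.mpr hne)))
  have hsq : ℓ * ℓ' < ((ℓ + ℓ') / 2) ^ 2 := by nlinarith
  have h1 : K₁ * (ℓ + ℓ') + K₂ * (ℓ * ℓ') < g 1 := by
    simp only [hg, one_mul]
    nlinarith [hsq]
  have hCpos : 0 < K₁ * (ℓ + ℓ') + K₂ * (ℓ * ℓ') := by positivity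
  have hmem : K₁ * (ℓ + ℓ') + K₂ * (ℓ * ℓ') ∈ Set.Ioo (g 0) (g 1) := by
    constructor
    · rw [h0]; exact hCpos
    · exact h1
  have := intermediate_value_Ioo (le_of_lt one_pos) hcont hmem
  obtain ⟨lam, hlam, heq⟩ := this
  refine ⟨lam, hlam, heq, ?_⟩
  nlinarith [hlam.2, hbarpos]
end
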